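/- arXiv:2109.03342 — 2 statements merged into one kernel-verified Lean document; each statement's English description precedes it below -/
import Mathlib

section
/- (Exact second permutation moment, symmetric case.) Let N ≥ 4 and let a = (a_{ij})_{1≤i,j≤N}, b = (b_{ij})_{1≤i,j≤N} be real arrays with a_{ij} = a_{ji} and b_{ij} = b_{ji} for all i, j. With Γ(π) = ∑_{i,j} a_{ij} b_{π(i)π(j)} and π uniform over the N! permutations of {1,…,N}, one has E[Γ^2] = ((N−4)!/N!)(∑'_{j,k,s,u} a_{jk} a_{su})(∑'_{i,l,r,t} b_{il} b_{rt}) + (4(N−3)!/N!)(∑'_{j,k,u} a_{jk} a_{ju})(∑'_{i,l,t} b_{il} b_{it}) + (2(N−3)!/N!)(∑'_{j,s,u} a_{jj} a_{su})(∑'_{i,r,t} b_{ii} b_{rt}) + (2(N−2)!/N!)(∑'_{j,k} a_{jk}^2)(∑'_{i,l} b_{il}^2) + ((N−2)!/N!)(∑'_{j,s} a_{jj} a_{ss})(∑'_{i,r} b_{ii} b_{rr}) + (4(N−2)!/N!)(∑'_{j,u} a_{jj} a_{ju})(∑'_{i,t} b_{ii} b_{it}) + ((N−1)!/N!)(∑_j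 a_{jj}^2)(∑_i b_{ii}^2), where ∑' denotes summation over pairwise distinct values of all displayed subscripts. -/
open MeasureTheory ProbabilityTheory Filter Finset Topology

/-- Generalized correlation coefficient `Γ(π) = ∑_{i,j} a_{ij} b_{π(i)π(j)}`. -/
noncomputable def gammaStat (N : ℕ) (a b : Fin N → Fin N → ℝ) (π : Equiv.Perm (Fin N)) : ℝ :=
  ∑ i, ∑ j, a i j * b (π i) (π j)

/-- Expectation of a statistic of a uniformly random permutation of `{1,…,N}`. -/
noncomputable def permE (N : ℕ) (f : Equiv.Perm (Fin N) → ℝ) : ℝ :=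
  (∑ π : Equiv.Perm (Fin N), f π) / (N.factorial : ℝ)

/-- Law of a real statistic of a uniformly random permutation of `{1,…,N}`. -/
noncomputable def permLaw (N : ℕ) (f : Equiv.Perm (Fin N) → ℝ) : ProbabilityMeasure ℝ :=
  ⟨((PMF.uniformOfFintype (Equiv.Perm (Fin N))).map f).toMeasure, inferInstance⟩

/-- The standard normal distribution `N(0,1)` as a probability measure on `ℝ`. -/
noncomputable def stdGaussian : ProbabilityMeasure ℝ := ⟨gaussianReal 0 1, inferInstance⟩

/-- `x_N ≍ y_N` : there are constants `0 < c ≤ C` with `c y_N ≤ x_N ≤ C y_N` for all large `N`. -/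
def AsympEquiv (x y : ℕ → ℝ) : Prop :=
  ∃ c C : ℝ, 0 < c ∧ c ≤ C ∧ ∀ᶠ N in atTop, c * y N ≤ x N ∧ x N ≤ C * y N

/-- `max_{i,j} |a_{ij}|`. -/
noncomputable def arrMax (N : ℕ) (a : Fin N → Fin N → ℝ) : ℝ := ⨆ i, ⨆ j, |a i j|

/-!
Expanding the square, `N! · E[Γ²] = ∑_{x ∈ [N]⁴} a_{x₀x₁} a_{x₂x₃} ∑_π b_{π x₀, π x₁} b_{π x₂, π x₃}`.
Sort the quadruples `x` by their coincidence pattern, one of the fifteen set partitions of the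
four positions. A quadruple with pattern `σ` (with `m` blocks) is `y ∘ σ` for an injective
`y : Fin m → [N]`. The permutations act transitively on these `y`, so `∑_π f (π ∘ y)` does not
depend on `y`, and averaging over the `N! / (N - m)!` injective `y` shows that it equals `(N - m)!`
times the sum of `f` over all of them. Hence each class contributes `(N - m)!` times its `a`-sum
times its `b`-sum. For symmetric `a` and `b`, classes of the same shape have equal sums, which
gives the multiplicities `4, 2, 2, 1, 4`.
-/

section Tuples

variable {α M : Type*}

theorem Fintype.sum_fin_succ_pi [Fintype α] [AddCommMonoid M] {n : ℕ}
    (F : (Fin (n + 1) → α) → M) : ∑ x, F x = ∑ i, ∑ y : Fin n → α, F (Matrix.vecCons i y) := by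
  rw [← (Fin.consEquiv fun _ => α).sum_comp, Fintype.sum_prod_type]
  rfl

theorem Fintype.sum_fin_zero_pi [Fintype α] [AddCommMonoid M] (F : (Fin 0 → α) → M) :
    ∑ x, F x = F ![] := by
  rw [Fintype.sum_unique]
  exact congrArg F (Subsingleton.elim _ _)

theorem Matrix.vecCons_injective_iff {n : ℕ} {i : α} {y : Fin n → α} :
    Function.Injective (Matrix.vecCons i y) ↔ i ∉ Set.range y ∧ Function.Injective y :=
  Fin.cons_injective_iff

theorem Matrix.comp_vecCons {β : Type*} {n : ℕ} (g : α → β) (i : α) (y : Fin n → α) :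
    g ∘ Matrix.vecCons i y = Matrix.vecCons (g i) (g ∘ y) :=
  Fin.comp_cons g i y

theorem Matrix.comp_vecEmpty {β : Type*} (g : α → β) : g ∘ ![] = ![] :=
  Matrix.empty_eq _

theorem eq_sum_ite_coincidence [DecidableEq α] [AddCommMonoid M] (G : α → α → α → α → M) :
    G = fun j k s u =>
      (if j ≠ k ∧ j ≠ s ∧ j ≠ u ∧ k ≠ s ∧ k ≠ u ∧ s ≠ u then G j k s u else 0)
      + (if j = s ∧ j ≠ k ∧ j ≠ u ∧ k ≠ u then G j k s u else 0)
      + (if j = u ∧ j ≠ k ∧ j ≠ s ∧ k ≠ s then G j k s u else 0)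
      + (if k = s ∧ j ≠ k ∧ j ≠ u ∧ k ≠ u then G j k s u else 0)
      + (if k = u ∧ j ≠ k ∧ j ≠ s ∧ k ≠ s then G j k s u else 0)
      + (if j = k ∧ j ≠ s ∧ j ≠ u ∧ s ≠ u then G j k s u else 0)
      + (if s = u ∧ j ≠ k ∧ j ≠ s ∧ k ≠ s then G j k s u else 0)
      + (if j = s ∧ k = u ∧ j ≠ k then G j k s u else 0)
      + (if j = u ∧ k = s ∧ j ≠ k then G j k s u else 0)
      + (if j = k ∧ s = u ∧ j ≠ s then G j k s u else 0)
      + (if j = k ∧ j = s ∧ j ≠ u then G j k s u else 0)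
      + (if j = k ∧ j = u ∧ j ≠ s then G j k s u else 0)
      + (if j = s ∧ j = u ∧ j ≠ k then G j k s u else 0)
      + (if k = s ∧ k = u ∧ j ≠ k then G j k s u else 0)
      + (if j = k ∧ j = s ∧ j = u then G j k s u else 0) := by
  funext j k s u
  generalize G j k s u = c
  rcases eq_or_ne j k with h1 | h1 <;> rcases eq_or_ne j s with h2 | h2 <;>
    rcases eq_or_ne j u with h3 | h3 <;> rcases eq_or_ne k s with h4 | h4 <;>
    rcases eq_or_ne k u with h5 | h5 <;> rcases eq_or_ne s u with h6 | h6 <;>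
    subst_vars <;> simp_all

end Tuples

section PatternSums

variable {α M : Type*} [Fintype α] [DecidableEq α] [AddCommMonoid M]

/-- The primed sum `∑'` over pairwise distinct subscripts. -/
def distinctSum {ι : Type*} [Fintype ι] [DecidableEq ι] (f : (ι → α) → M) : M :=
  ∑ y, if Function.Injective y then f y else 0

/-- The sum of `f` over the tuples whose coincidence pattern is that of `σ`: these are the
`y ∘ σ` with `y` injective, and `y` is unique when `σ` is surjective. -/
def patternSum {κ ι : Type*} [Fintype ι] [DecidableEq ι] (σ : κ → ι) (f : (κ → α) → M) : M :=
  distinctSum fun y : ι → α => f (y ∘ σ)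

theorem distinctSum_fin_one (f : (Fin 1 → α) → M) : distinctSum f = ∑ i, f ![i] := by
  simp only [distinctSum, Fintype.sum_fin_succ_pi, Function.injective_of_subsingleton, if_true,
    Fintype.sum_fin_zero_pi]

theorem distinctSum_fin_two (f : (Fin 2 → α) → M) :
    distinctSum f = ∑ i, ∑ j, if i ≠ j then f ![i, j] else 0 := by
  simp only [distinctSum, Fintype.sum_fin_succ_pi, Matrix.vecCons_injective_iff,
    Function.injective_of_subsingleton, Matrix.range_cons, Matrix.range_empty, Set.union_empty,
    Set.mem_singleton_iff, Fintype.sum_fin_zero_pi, and_true, ne_eq]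

theorem distinctSum_fin_three (f : (Fin 3 → α) → M) :
    distinctSum f = ∑ i, ∑ j, ∑ k, if i ≠ j ∧ i ≠ k ∧ j ≠ k then f ![i, j, k] else 0 := by
  simp only [distinctSum, Fintype.sum_fin_succ_pi, Matrix.vecCons_injective_iff,
    Function.injective_of_subsingleton, Matrix.range_cons, Matrix.range_empty, Set.union_empty,
    Set.mem_union, Set.mem_singleton_iff, Fintype.sum_fin_zero_pi, and_true, ne_eq, not_or,
    and_assoc]

theorem distinctSum_fin_four (f : (Fin 4 → α) → M) :
    distinctSum f = ∑ i, ∑ j, ∑ k, ∑ l,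
      if i ≠ j ∧ i ≠ k ∧ i ≠ l ∧ j ≠ k ∧ j ≠ l ∧ k ≠ l then f ![i, j, k, l] else 0 := by
  simp only [distinctSum, Fintype.sum_fin_succ_pi, Matrix.vecCons_injective_iff,
    Function.injective_of_subsingleton, Matrix.range_cons, Matrix.range_empty, Set.union_empty,
    Set.mem_union, Set.mem_singleton_iff, Fintype.sum_fin_zero_pi, and_true, ne_eq, not_or,
    and_assoc]

theorem patternSum_eq_of_eq_perm_comp {κ ι : Type*} [Fintype ι] [DecidableEq ι]
    (e : Equiv.Perm ι) {σ τ : κ → ι} (h : τ = e ∘ σ) (f : (κ → α) → M) :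
    patternSum τ f = patternSum σ f := by
  subst h
  unfold patternSum distinctSum
  refine Fintype.sum_bijective (· ∘ e) (e.symm.arrowCongr (Equiv.refl α)).bijective _ _
    fun y => ?_
  simp only [Equiv.injective_comp]
  rfl

/-- The fifteen set partitions of the four positions, each given by its restricted growth
string. -/
theorem sum_eq_sum_patternSum (F : (Fin 4 → α) → M) :
    ∑ x, F x =
      patternSum (![0, 1, 2, 3] : Fin 4 → Fin 4) F
      + patternSum (![0, 1, 0, 2] : Fin 4 → Fin 3) F + patternSum (![0, 1, 2, 0] : Fin 4 → Fin 3) F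
      + patternSum (![0, 1, 1, 2] : Fin 4 → Fin 3) F + patternSum (![0, 1, 2, 1] : Fin 4 → Fin 3) F
      + patternSum (![0, 0, 1, 2] : Fin 4 → Fin 3) F + patternSum (![0, 1, 2, 2] : Fin 4 → Fin 3) F
      + patternSum (![0, 1, 0, 1] : Fin 4 → Fin 2) F + patternSum (![0, 1, 1, 0] : Fin 4 → Fin 2) F
      + patternSum (![0, 0, 1, 1] : Fin 4 → Fin 2) F
      + patternSum (![0, 0, 0, 1] : Fin 4 → Fin 2) F + patternSum (![0, 0, 1, 0] : Fin 4 → Fin 2) F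
      + patternSum (![0, 1, 0, 0] : Fin 4 → Fin 2) F + patternSum (![0, 1, 1, 1] : Fin 4 → Fin 2) F
      + patternSum (![0, 0, 0, 0] : Fin 4 → Fin 1) F := by
  simp only [patternSum, distinctSum_fin_one, distinctSum_fin_two, distinctSum_fin_three,
    distinctSum_fin_four, Fintype.sum_fin_succ_pi, Fintype.sum_fin_zero_pi, Matrix.comp_vecCons,
    Matrix.comp_vecEmpty, Matrix.cons_val_zero, Matrix.cons_val_one, Matrix.cons_val_two,
    Matrix.cons_val_three, Matrix.head_cons, Matrix.tail_cons]
  -- Abstract `F ![j, k, s, u]` so that the case split acts on plain variables.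
  obtain ⟨G, hG⟩ : ∃ G : α → α → α → α → M, ∀ j k s u, F ![j, k, s, u] = G j k s u :=
    ⟨_, fun _ _ _ _ => rfl⟩
  simp only [hG]
  conv_lhs => rw [eq_sum_ite_coincidence G]
  simp only [sum_add_distrib, ite_and, sum_ite_irrel, sum_const_zero, sum_ite_eq, mem_univ,
    if_true]

end PatternSums

section Permutations

instance Equiv.Perm.isPretransitive_embedding {α ι : Type*} [Finite ι] :
    MulAction.IsPretransitive (Equiv.Perm α) (ι ↪ α) :=
  ⟨Equiv.Perm.exists_smul_eq_embedding⟩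

theorem MulAction.card_nsmul_sum_smul (G : Type*) {X M : Type*} [Group G] [Fintype G]
    [MulAction G X] [Fintype X] [MulAction.IsPretransitive G X] [AddCommMonoid M]
    (f : X → M) (x : X) :
    Fintype.card X • ∑ g : G, f (g • x) = Fintype.card G • ∑ y, f y := by
  have orbit_sum : ∀ y, ∑ g : G, f (g • y) = ∑ g : G, f (g • x) := by
    intro y
    obtain ⟨h, rfl⟩ := MulAction.exists_smul_eq G x y
    simpa only [Equiv.coe_mulRight, mul_smul] using
      Equiv.sum_comp (Equiv.mulRight h) (fun g => f (g • x))
  calc Fintype.card X • ∑ g : G, f (g • x) = ∑ y : X, ∑ g : G, f (g • y) := by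
        simp only [orbit_sum, sum_const, card_univ]
    _ = ∑ g : G, ∑ y, f (g • y) := sum_comm
    _ = ∑ _g : G, ∑ y, f y := sum_congr rfl fun g _ => Equiv.sum_comp (MulAction.toPerm g) f
    _ = Fintype.card G • ∑ y, f y := by rw [sum_const, card_univ]

variable {α : Type*} [Fintype α] [DecidableEq α]

theorem sum_embedding_eq_distinctSum {ι M : Type*} [Fintype ι] [DecidableEq ι] [AddCommMonoid M]
    (f : (ι → α) → M) : ∑ w : ι ↪ α, f w = distinctSum f := by
  rw [distinctSum, ← sum_filter, ← (Equiv.subtypeInjectiveEquivEmbedding ι α).sum_comp,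
    sum_subtype _ (fun _ => mem_filter.trans (and_iff_right (mem_univ _)))]
  rfl

theorem Equiv.Perm.sum_comp_injective {ι M : Type*} [Fintype ι] [DecidableEq ι]
    [AddCommMonoid M] [IsAddTorsionFree M] (f : (ι → α) → M) {x : ι → α}
    (hx : Function.Injective x) :
    ∑ π : Perm α, f (π ∘ x) = (Fintype.card α - Fintype.card ι).factorial • distinctSum f := by
  have hle := Fintype.card_le_of_injective x hx
  have orbit := MulAction.card_nsmul_sum_smul (Perm α) (fun w : ι ↪ α => f w) ⟨x, hx⟩
  rw [Fintype.card_embedding_eq, Fintype.card_perm, ← Nat.factorial_mul_descFactorial hle,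
    mul_comm, mul_smul, sum_embedding_eq_distinctSum] at orbit
  exact nsmul_right_injective (Nat.descFactorial_pos.2 hle).ne' orbit

theorem patternSum_mul_sum_perm {κ ι R : Type*} [Fintype ι] [DecidableEq ι]
    [NonUnitalNonAssocSemiring R] [IsAddTorsionFree R] (σ : κ → ι) (A B : (κ → α) → R) :
    patternSum σ (fun x => A x * ∑ π : Equiv.Perm α, B (π ∘ x)) =
      (Fintype.card α - Fintype.card ι).factorial • (patternSum σ A * patternSum σ B) := by
  unfold patternSum
  rw [← mul_smul_comm, distinctSum, distinctSum, sum_mul]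
  refine sum_congr rfl fun y _ => ?_
  split_ifs with hy
  · rw [← Equiv.Perm.sum_comp_injective (fun w => B (w ∘ σ)) hy]
    rfl
  · rw [zero_mul]

end Permutations

def entryProduct {α R : Type*} [Mul R] (c : α → α → R) (x : Fin 4 → α) : R :=
  c (x 0) (x 1) * c (x 2) (x 3)

theorem sq_sum_mul_eq_sum_entryProduct {α R : Type*} [Fintype α] [CommSemiring R]
    (c d : α → α → R) (π : α → α) :
    (∑ i, ∑ j, c i j * d (π i) (π j)) ^ 2 =
      ∑ x : Fin 4 → α, entryProduct c x * entryProduct d (π ∘ x) := by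
  simp_rw [sq, sum_mul, mul_sum]
  simp only [entryProduct, Fintype.sum_fin_succ_pi, Fintype.sum_fin_zero_pi, Function.comp_apply,
    Matrix.cons_val_zero, Matrix.cons_val_one, Matrix.cons_val_two, Matrix.cons_val_three,
    Matrix.head_cons, Matrix.tail_cons, mul_mul_mul_comm]

theorem permE_sq_gammaStat_symmetric_general (N : ℕ) (a b : Fin N → Fin N → ℝ)
    (ha_symm : ∀ i j, a i j = a j i) (hb_symm : ∀ i j, b i j = b j i) :
    permE N (fun π => (gammaStat N a b π) ^ 2) =
      (((N - 4).factorial : ℝ) / (N.factorial : ℝ))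
        * (∑ j, ∑ k, ∑ s, ∑ u,
            if j ≠ k ∧ j ≠ s ∧ j ≠ u ∧ k ≠ s ∧ k ≠ u ∧ s ≠ u then a j k * a s u else 0)
        * (∑ i, ∑ l, ∑ r, ∑ t,
            if i ≠ l ∧ i ≠ r ∧ i ≠ t ∧ l ≠ r ∧ l ≠ t ∧ r ≠ t then b i l * b r t else 0)
      + (4 * ((N - 3).factorial : ℝ) / (N.factorial : ℝ))
        * (∑ j, ∑ k, ∑ u, if j ≠ k ∧ j ≠ u ∧ k ≠ u then a j k * a j u else 0)
        * (∑ i, ∑ l, ∑ t, if i ≠ l ∧ i ≠ t ∧ l ≠ t then b i l * b i t else 0)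
      + (2 * ((N - 3).factorial : ℝ) / (N.factorial : ℝ))
        * (∑ j, ∑ s, ∑ u, if j ≠ s ∧ j ≠ u ∧ s ≠ u then a j j * a s u else 0)
        * (∑ i, ∑ r, ∑ t, if i ≠ r ∧ i ≠ t ∧ r ≠ t then b i i * b r t else 0)
      + (2 * ((N - 2).factorial : ℝ) / (N.factorial : ℝ))
        * (∑ j, ∑ k, if j ≠ k then (a j k) ^ 2 else 0)
        * (∑ i, ∑ l, if i ≠ l then (b i l) ^ 2 else 0)
      + (((N - 2).factorial : ℝ) / (N.factorial : ℝ))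
        * (∑ j, ∑ s, if j ≠ s then a j j * a s s else 0)
        * (∑ i, ∑ r, if i ≠ r then b i i * b r r else 0)
      + (4 * ((N - 2).factorial : ℝ) / (N.factorial : ℝ))
        * (∑ j, ∑ u, if j ≠ u then a j j * a j u else 0)
        * (∑ i, ∑ t, if i ≠ t then b i i * b i t else 0)
      + (((N - 1).factorial : ℝ) / (N.factorial : ℝ))
        * (∑ j, (a j j) ^ 2) * (∑ i, (b i i) ^ 2) := by
  -- Relabel the blocks so that a repeated index comes first, as in the primed sums of the claim.
  have h0112 := patternSum_eq_of_eq_perm_comp (α := Fin N) (M := ℝ) (Equiv.swap 0 1)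
    (σ := (![1, 0, 0, 2] : Fin 4 → Fin 3)) (τ := ![0, 1, 1, 2]) (by decide)
  have h0121 := patternSum_eq_of_eq_perm_comp (α := Fin N) (M := ℝ) (Equiv.swap 0 1)
    (σ := (![1, 0, 2, 0] : Fin 4 → Fin 3)) (τ := ![0, 1, 2, 1]) (by decide)
  have h0122 := patternSum_eq_of_eq_perm_comp (α := Fin N) (M := ℝ) (finRotate 3).symm
    (σ := (![1, 2, 0, 0] : Fin 4 → Fin 3)) (τ := ![0, 1, 2, 2]) (by decide)
  have h0111 := patternSum_eq_of_eq_perm_comp (α := Fin N) (M := ℝ) (Equiv.swap 0 1)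
    (σ := (![1, 0, 0, 0] : Fin 4 → Fin 2)) (τ := ![0, 1, 1, 1]) (by decide)
  unfold permE gammaStat
  simp only [sq_sum_mul_eq_sum_entryProduct]
  rw [sum_comm]
  simp only [← mul_sum]
  rw [sum_eq_sum_patternSum]
  simp only [patternSum_mul_sum_perm, Fintype.card_fin, h0112, h0121, h0122, h0111]
  simp only [patternSum, distinctSum_fin_one, distinctSum_fin_two,
    distinctSum_fin_three, distinctSum_fin_four, entryProduct, Function.comp_apply,
    Matrix.cons_val_zero, Matrix.cons_val_one, Matrix.cons_val_two, Matrix.cons_val_three,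
    Matrix.head_cons, Matrix.tail_cons, nsmul_eq_mul]
  -- Ordered rewriting with the symmetries brings same-shape pattern sums to one normal form.
  simp only [ha_symm, hb_symm, mul_comm, sq]
  ring

/-- **Exact second permutation moment, symmetric case.** All primed sums are written out
as nested sums restricted (via indicators) to pairwise distinct subscripts. -/
theorem permE_sq_gammaStat_symmetric (N : ℕ) (hN : 4 ≤ N) (a b : Fin N → Fin N → ℝ)
    (ha_symm : ∀ i j, a i j = a j i) (hb_symm : ∀ i j, b i j = b j i) :
    permE N (fun π => (gammaStat N a b π) ^ 2) =
      (((N - 4).factorial : ℝ) / (N.factorial : ℝ))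
        * (∑ j, ∑ k, ∑ s, ∑ u,
            if j ≠ k ∧ j ≠ s ∧ j ≠ u ∧ k ≠ s ∧ k ≠ u ∧ s ≠ u then a j k * a s u else 0)
        * (∑ i, ∑ l, ∑ r, ∑ t,
            if i ≠ l ∧ i ≠ r ∧ i ≠ t ∧ l ≠ r ∧ l ≠ t ∧ r ≠ t then b i l * b r t else 0)
      + (4 * ((N - 3).factorial : ℝ) / (N.factorial : ℝ))
        * (∑ j, ∑ k, ∑ u, if j ≠ k ∧ j ≠ u ∧ k ≠ u then a j k * a j u else 0)
        * (∑ i, ∑ l, ∑ t, if i ≠ l ∧ i ≠ t ∧ l ≠ t then b i l * b i t else 0)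
      + (2 * ((N - 3).factorial : ℝ) / (N.factorial : ℝ))
        * (∑ j, ∑ s, ∑ u, if j ≠ s ∧ j ≠ u ∧ s ≠ u then a j j * a s u else 0)
        * (∑ i, ∑ r, ∑ t, if i ≠ r ∧ i ≠ t ∧ r ≠ t then b i i * b r t else 0)
      + (2 * ((N - 2).factorial : ℝ) / (N.factorial : ℝ))
        * (∑ j, ∑ k, if j ≠ k then (a j k) ^ 2 else 0)
        * (∑ i, ∑ l, if i ≠ l then (b i l) ^ 2 else 0)
      + (((N - 2).factorial : ℝ) / (N.factorial : ℝ))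
        * (∑ j, ∑ s, if j ≠ s then a j j * a s s else 0)
        * (∑ i, ∑ r, if i ≠ r then b i i * b r r else 0)
      + (4 * ((N - 2).factorial : ℝ) / (N.factorial : ℝ))
        * (∑ j, ∑ u, if j ≠ u then a j j * a j u else 0)
        * (∑ i, ∑ t, if i ≠ t then b i i * b i t else 0)
      + (((N - 1).factorial : ℝ) / (N.factorial : ℝ))
        * (∑ j, (a j j) ^ 2) * (∑ i, (b i i) ^ 2) :=
  permE_sq_gammaStat_symmetric_general N a b ha_symm hb_symm
end

section
/- (Even moment order bound.) Let a^{(N)}, b^{(N)} be sequences of real N×N arrays with a_{ij} = a_{ji}, b_{ij} = b_{ji}, ∑_{i,j} a_{ij} = ∑_{i,j} b_{ij} = 0, and ∑_{i,j,k} a_{ij} a_{ik} ≍ N^3 (max_{i,j} |a_{ij}|)^2, ∑_{i,j,k} b_{ij} b_{ik} ≍ N^3 (max_{i,j} |b_{ij}|)^2 as N → ∞. Let Γ_N(π) = ∑_{i,j} a_{ij} b_{π(i)π(j)} with π uniform over permutations of {1,…,N}, and write a_max = max_{i,j} |a_{ij}|, b_max = max_{i,j} |b_{ij}|. Then for every fixed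 positive integer m, E[Γ_N^{2m}] = O( N^{3m} · a_max^{2m} · b_max^{2m} ) as N → ∞. -/
open MeasureTheory ProbabilityTheory Filter Finset Topology

/-- counting: sum over tuples of N^{-#distinct values} is O(1). -/
lemma count_aux (N : ℕ) : ∀ (k : ℕ),
    ∑ u : Fin k → Fin N, ((N:ℝ)⁻¹) ^ (Finset.image u Finset.univ).card ≤ (k.factorial : ℝ) := by
  intro k
  induction k with
  | zero =>
    simp
  | succ k ih =>
    rcases Nat.eq_zero_or_pos N with hN | hN
    · subst hN
      rw [Finset.univ_eq_empty, Finset.sum_empty]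
      positivity
    have key : ∀ u : Fin k → Fin N, ∑ x : Fin N,
        ((N:ℝ)⁻¹) ^ (insert x (Finset.image u Finset.univ)).card
        ≤ (k+1 : ℝ) * ((N:ℝ)⁻¹) ^ (Finset.image u Finset.univ).card := by
      intro u
      set T := Finset.image u Finset.univ with hT
      have hTc : T.card ≤ k := le_trans (Finset.card_image_le) (by simp)
      have hsplit : ∑ x : Fin N, ((N:ℝ)⁻¹) ^ (insert x T).card
          = ∑ x ∈ T, ((N:ℝ)⁻¹) ^ (insert x T).card
            + ∑ x ∈ Tᶜ, ((N:ℝ)⁻¹) ^ (insert x T).card := by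
        rw [Finset.sum_add_sum_compl]
      rw [hsplit]
      have h1 : ∑ x ∈ T, ((N:ℝ)⁻¹) ^ (insert x T).card = T.card * ((N:ℝ)⁻¹) ^ T.card := by
        rw [Finset.sum_congr rfl (fun x hx => by rw [Finset.insert_eq_self.2 hx])]
        simp [mul_comm]
      have h2 : ∑ x ∈ Tᶜ, ((N:ℝ)⁻¹) ^ (insert x T).card
          = (Tᶜ).card * ((N:ℝ)⁻¹) ^ (T.card + 1) := by
        rw [Finset.sum_congr rfl (fun x hx => by
          rw [Finset.card_insert_of_notMem (by simpa using hx)])]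
        simp [mul_comm]
      rw [h1, h2]
      have hNpos : (0:ℝ) < N := by exact_mod_cast hN
      have h3 : ((Tᶜ).card : ℝ) ≤ (N:ℝ) := by
        have := Finset.card_le_univ (Tᶜ)
        simp only [Fintype.card_fin] at this
        exact_mod_cast this
      have h4 : ((N:ℝ)) * ((N:ℝ)⁻¹) ^ (T.card + 1) = ((N:ℝ)⁻¹) ^ T.card := by
        rw [pow_succ]
        field_simp
      have hpow : (0:ℝ) ≤ ((N:ℝ)⁻¹) ^ (T.card+1) := by positivity
      calc (T.card : ℝ) * ((N:ℝ)⁻¹) ^ T.card + (Tᶜ).card * ((N:ℝ)⁻¹) ^ (T.card + 1)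
          ≤ (T.card : ℝ) * ((N:ℝ)⁻¹) ^ T.card + (N:ℝ) * ((N:ℝ)⁻¹) ^ (T.card + 1) := by
            gcongr
        _ = ((T.card : ℝ) + 1) * ((N:ℝ)⁻¹) ^ T.card := by rw [h4]; ring
        _ ≤ (k+1 : ℝ) * ((N:ℝ)⁻¹) ^ T.card := by
            have hk : (T.card:ℝ)+1 ≤ (k+1:ℝ) := by exact_mod_cast Nat.succ_le_succ hTc
            have : (0:ℝ) ≤ ((N:ℝ)⁻¹) ^ T.card := by positivity
            exact mul_le_mul_of_nonneg_right hk this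
    -- now reindex
    have hre : ∑ u : Fin (k+1) → Fin N, ((N:ℝ)⁻¹) ^ (Finset.image u Finset.univ).card
        = ∑ p : Fin N × (Fin k → Fin N),
            ((N:ℝ)⁻¹) ^ (insert p.1 (Finset.image p.2 Finset.univ)).card := by
      rw [← (Fin.consEquiv (fun _ : Fin (k+1) => Fin N)).sum_comp]
      apply Fintype.sum_congr
      intro p
      congr 2
      ext y
      simp only [Finset.mem_image, Finset.mem_insert, Finset.mem_univ, true_and]
      constructor
      · rintro ⟨i, hi⟩
        rcases Fin.eq_zero_or_eq_succ i with h0 | ⟨j, hj⟩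
        · left; rw [h0] at hi; simpa [Fin.consEquiv] using hi.symm
        · right; exact ⟨j, by rw [hj] at hi; simpa [Fin.consEquiv] using hi⟩
      · rintro (h0 | ⟨j, hj⟩)
        · refine ⟨0, ?_⟩
          simpa [Fin.consEquiv] using h0.symm
        · refine ⟨j.succ, ?_⟩
          simpa [Fin.consEquiv] using hj
    rw [hre, Fintype.sum_prod_type_right]
    calc ∑ u : Fin k → Fin N, ∑ x : Fin N, ((N:ℝ)⁻¹) ^ (insert x (Finset.image u Finset.univ)).card
        ≤ ∑ u : Fin k → Fin N, (k+1:ℝ) * ((N:ℝ)⁻¹) ^ (Finset.image u Finset.univ).card := by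
          exact Finset.sum_le_sum (fun u _ => key u)
      _ = (k+1:ℝ) * ∑ u : Fin k → Fin N, ((N:ℝ)⁻¹) ^ (Finset.image u Finset.univ).card := by
          rw [Finset.mul_sum]
      _ ≤ (k+1:ℝ) * (k.factorial : ℝ) := mul_le_mul_of_nonneg_left ih (by positivity)
      _ = ((k+1).factorial : ℝ) := by rw [Nat.factorial_succ]; push_cast; ring

lemma count_aux' (N : ℕ) (ι : Type) [Fintype ι] [DecidableEq ι] :
    ∑ u : ι → Fin N, ((N:ℝ)⁻¹) ^ (Finset.image u Finset.univ).card
      ≤ ((Fintype.card ι).factorial : ℝ) := by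
  classical
  obtain ⟨e⟩ : Nonempty (ι ≃ Fin (Fintype.card ι)) := ⟨Fintype.equivFin ι⟩
  have h := count_aux N (Fintype.card ι)
  refine le_trans (le_of_eq ?_) h
  rw [← (Equiv.arrowCongr e (Equiv.refl (Fin N))).sum_comp]
  apply Fintype.sum_congr
  intro u
  congr 2
  ext y
  simp only [Finset.mem_image, Finset.mem_univ, true_and, Equiv.arrowCongr_apply,
    Equiv.refl_apply, Function.comp]
  constructor
  · rintro ⟨i, hi⟩; exact ⟨e i, by simpa using hi⟩
  · rintro ⟨j, hj⟩; exact ⟨e.symm j, by simpa using hj⟩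

/-- `(N-v)! * N^v ≤ N! * 2^v` when `2v ≤ N`. -/
lemma fact_bound {N v : ℕ} (h : 2*v ≤ N) :
    ((N - v).factorial : ℝ) * (N:ℝ)^v ≤ (N.factorial : ℝ) * 2^v := by
  have hvN : v ≤ N := le_trans (by omega) h
  have key : (N - v).factorial * (N - v + 1)^v ≤ N.factorial := by
    have := @Nat.factorial_mul_pow_le_factorial (N - v) v
    simpa [Nat.sub_add_cancel hvN] using this
  have h2 : (N:ℝ) ≤ 2 * ((N:ℝ) - v + 1) := by
    have : (v:ℝ) ≤ N := by exact_mod_cast hvN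
    have h2v : 2*(v:ℝ) ≤ N := by exact_mod_cast h
    linarith
  have hNv : ((N - v : ℕ) : ℝ) = (N:ℝ) - v := by
    push_cast [Nat.cast_sub hvN]; ring
  calc ((N - v).factorial : ℝ) * (N:ℝ)^v
      ≤ ((N - v).factorial : ℝ) * (2 * ((N:ℝ) - v + 1))^v := by
        refine mul_le_mul_of_nonneg_left ?_ (by positivity)
        exact pow_le_pow_left₀ (Nat.cast_nonneg N) h2 v
  _ = (((N - v).factorial : ℝ) * ((N:ℝ) - v + 1)^v) * 2^v := by rw [mul_pow]; ring
  _ ≤ (N.factorial : ℝ) * 2^v := by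
        gcongr
        have : (((N-v).factorial * (N - v + 1)^v : ℕ) : ℝ) ≤ (N.factorial : ℝ) := by
          exact_mod_cast key
        push_cast at this
        rw [hNv] at this
        exact this

variable {N : ℕ}

/-- Any injection on a finset extends to a permutation. -/
lemma perm_extend {S : Finset (Fin N)} (h : {x // x ∈ S} → Fin N)
    (hinj : Function.Injective h) : ∃ π : Equiv.Perm (Fin N), ∀ x : {x // x ∈ S}, π ↑x = h x := by
  classical
  set T : Finset (Fin N) := Finset.univ.image h with hT
  have hmem : ∀ x : {x // x ∈ S}, h x ∈ T := fun x => Finset.mem_image_of_mem _ (Finset.mem_univ x)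
  let e₁ : {x // x ∈ S} ≃ {y // y ∈ T} := Equiv.ofBijective (fun x => ⟨h x, hmem x⟩)
    ⟨fun x y hxy => hinj (by simpa using hxy),
     fun y => by
      rcases Finset.mem_image.1 y.2 with ⟨x, -, hx⟩
      exact ⟨x, Subtype.ext hx⟩⟩
  have hcard : Fintype.card {x // ¬ x ∈ S} = Fintype.card {y // ¬ y ∈ T} := by
    have h1 : Fintype.card {x // x ∈ S} = Fintype.card {y // y ∈ T} := Fintype.card_congr e₁
    have h2 := Fintype.card_subtype_compl (fun x : Fin N => x ∈ S)
    have h3 := Fintype.card_subtype_compl (fun y : Fin N => y ∈ T)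
    rw [h2, h3, h1]
  have e₂ : {x // ¬ x ∈ S} ≃ {y // ¬ y ∈ T} := Fintype.equivOfCardEq hcard
  refine ⟨((Equiv.sumCompl (· ∈ S)).symm.trans ((e₁.sumCongr e₂).trans
    (Equiv.sumCompl (· ∈ T)))), ?_⟩
  intro x
  simp only [Equiv.trans_apply]
  rw [Equiv.sumCompl_symm_apply_of_pos x.2]
  simp [Equiv.sumCongr_apply]
  rfl

/-- The number of permutations fixing `S` pointwise. -/
lemma card_fixing (S : Finset (Fin N)) :
    (Finset.univ.filter (fun σ : Equiv.Perm (Fin N) => ∀ x ∈ S, σ x = x)).card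
      = (N - S.card).factorial := by
  classical
  have hiff : ∀ σ : Equiv.Perm (Fin N), (∀ x ∈ S, σ x = x) → ∀ x, ¬ x ∈ S ↔ ¬ σ x ∈ S := by
    intro σ hσ x
    constructor
    · intro hx hsx
      have h1 : σ (σ x) = σ x := hσ _ hsx
      have h2 : σ x = x := σ.injective h1
      rw [h2] at hsx
      exact hx hsx
    · intro hsx hx
      have h2 : σ x = x := hσ _ hx
      rw [← h2] at hx
      exact hsx hx
  have hinj : Function.Injective
      (fun τ : Equiv.Perm {x : Fin N // ¬ x ∈ S} => Equiv.Perm.ofSubtype τ) := by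
    intro τ τ' hts
    apply Equiv.ext
    intro x
    have h0 := congrArg (fun σ : Equiv.Perm (Fin N) => σ (x : Fin N)) hts
    simp only at h0
    rw [Equiv.Perm.ofSubtype_apply_of_mem τ x.2, Equiv.Perm.ofSubtype_apply_of_mem τ' x.2] at h0
    exact Subtype.coe_injective h0
  have himg : Finset.univ.filter (fun σ : Equiv.Perm (Fin N) => ∀ x ∈ S, σ x = x)
      = Finset.image (fun τ : Equiv.Perm {x : Fin N // ¬ x ∈ S} => Equiv.Perm.ofSubtype τ)
          Finset.univ := by
    ext σ
    simp only [Finset.mem_filter, Finset.mem_univ, true_and, Finset.mem_image]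
    constructor
    · intro hσ
      refine ⟨σ.subtypePerm (fun x => (hiff σ hσ x).symm), ?_⟩
      apply Equiv.ext
      intro x
      by_cases hx : x ∈ S
      · rw [Equiv.Perm.ofSubtype_apply_of_not_mem (σ.subtypePerm (fun x => (hiff σ hσ x).symm)) (not_not_intro hx)]
        exact (hσ x hx).symm
      · rw [Equiv.Perm.ofSubtype_apply_of_mem (σ.subtypePerm (fun x => (hiff σ hσ x).symm)) hx]
        simp [Equiv.Perm.subtypePerm_apply]
    · rintro ⟨τ, rfl⟩
      intro x hx
      exact Equiv.Perm.ofSubtype_apply_of_not_mem τ (not_not_intro hx)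
  rw [himg, Finset.card_image_of_injective _ hinj, Finset.card_univ, Fintype.card_perm,
    Fintype.card_subtype_compl, Fintype.card_coe, Fintype.card_fin]

/-- Extend a partial function on `S` to `Fin N` (identity elsewhere). -/
noncomputable def extFun (S : Finset (Fin N)) (h : {x // x ∈ S} → Fin N) : Fin N → Fin N :=
  fun i => if hi : i ∈ S then h ⟨i, hi⟩ else i

lemma extFun_mem (S : Finset (Fin N)) (h : {x // x ∈ S} → Fin N) {i : Fin N} (hi : i ∈ S) :
    extFun S h i = h ⟨i, hi⟩ := dif_pos hi

/-- Exchangeability: a permutation sum of a statistic depending on `S`-values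
equals `(N-|S|)!` times the sum over injections of `S`. -/
lemma exchange (S : Finset (Fin N)) (g : (Fin N → Fin N) → ℝ)
    (hg : ∀ f₁ f₂ : Fin N → Fin N, (∀ i ∈ S, f₁ i = f₂ i) → g f₁ = g f₂) :
    ∑ π : Equiv.Perm (Fin N), g ⇑π
      = ((N - S.card).factorial : ℝ) *
        ∑ h : {x // x ∈ S} → Fin N, (if Function.Injective h then g (extFun S h) else 0) := by
  classical
  set res : Equiv.Perm (Fin N) → ({x // x ∈ S} → Fin N) := fun π x => π ↑x with hres
  set F : ({x // x ∈ S} → Fin N) → ℝ :=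
    fun h => if Function.Injective h then g (extFun S h) else 0 with hF
  have hresinj : ∀ π : Equiv.Perm (Fin N), Function.Injective (res π) := by
    intro π x y hxy
    exact Subtype.coe_injective (π.injective hxy)
  have step1 : ∀ π : Equiv.Perm (Fin N), g ⇑π = F (res π) := by
    intro π
    rw [hF]
    simp only [if_pos (hresinj π)]
    exact hg _ _ (fun i hi => (extFun_mem S (res π) hi).symm)
  have hcard : ∀ h : {x // x ∈ S} → Fin N,
      (Finset.univ.filter (fun π : Equiv.Perm (Fin N) => res π = h)).card
        = if Function.Injective h then (N - S.card).factorial else 0 := by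
    intro h
    by_cases hinj : Function.Injective h
    · rw [if_pos hinj]
      obtain ⟨π₀, hπ₀⟩ := perm_extend h hinj
      rw [← card_fixing S]
      apply Finset.card_nbij' (fun π => π₀⁻¹ * π) (fun σ => π₀ * σ)
      · intro π hπ
        simp only [Finset.mem_coe, Finset.mem_filter, Finset.mem_univ, true_and] at hπ ⊢
        intro x hx
        have : π x = h ⟨x, hx⟩ := congrFun hπ ⟨x, hx⟩
        rw [Equiv.Perm.mul_apply, this, ← hπ₀ ⟨x, hx⟩]
        exact π₀.symm_apply_apply x
      · intro σ hσ
        simp only [Finset.mem_coe, Finset.mem_filter, Finset.mem_univ, true_and] at hσ ⊢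
        funext x
        rw [hres]
        simp only [Equiv.Perm.mul_apply]
        rw [hσ _ x.2, hπ₀ x]
      · intro π _; group
      · intro σ _; group
    · rw [if_neg hinj]
      rw [Finset.card_eq_zero]
      rw [Finset.filter_eq_empty_iff]
      intro π _ hcontra
      exact hinj (hcontra ▸ hresinj π)
  calc ∑ π : Equiv.Perm (Fin N), g ⇑π = ∑ π : Equiv.Perm (Fin N), F (res π) := by
        exact Fintype.sum_congr _ _ step1
    _ = ∑ h : {x // x ∈ S} → Fin N,
          ∑ π ∈ Finset.univ.filter (fun π : Equiv.Perm (Fin N) => res π = h), F (res π) := by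
        rw [Finset.sum_fiberwise_of_maps_to (fun π _ => Finset.mem_univ (res π))]
    _ = ∑ h : {x // x ∈ S} → Fin N,
          ((Finset.univ.filter (fun π : Equiv.Perm (Fin N) => res π = h)).card : ℝ) * F h := by
        apply Finset.sum_congr rfl
        intro h _
        rw [Finset.sum_congr rfl (fun π hπ => by
          rw [(Finset.mem_filter.1 hπ).2]), Finset.sum_const, nsmul_eq_mul]
    _ = ((N - S.card).factorial : ℝ) * ∑ h : {x // x ∈ S} → Fin N, F h := by
        rw [Finset.mul_sum]
        apply Finset.sum_congr rfl
        intro h _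
        rw [hcard h]
        by_cases hinj : Function.Injective h
        · rw [if_pos hinj]
        · rw [if_neg hinj, hF]
          simp only [if_neg hinj]
          push_cast
          ring

/-- Inclusion–exclusion bound: a sum over injections is controlled by sums over
all functions factoring through quotients. -/
lemma inj_sum_bound {N : ℕ} (V : Type) [Fintype V] [DecidableEq V]
    (G : (V → Fin N) → ℝ) (B : ℝ)
    (hB : ∀ (C : Type) [Fintype C] [DecidableEq C] (q : V → C), Function.Surjective q →
      |∑ ψ : C → Fin N, G (fun v => ψ (q v))| ≤ B) :
    |∑ h : V → Fin N, if Function.Injective h then G h else 0|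
      ≤ 2 ^ (Fintype.card V * Fintype.card V) * B := by
  classical
  set D : Finset (V × V) := Finset.univ.offDiag with hD
  set e : V × V → (V → Fin N) → ℝ :=
    fun p h => if h p.1 = h p.2 then 1 else 0 with he
  have h1 : ∀ h : V → Fin N, (if Function.Injective h then G h else 0)
      = G h * ∏ p ∈ D, ((1:ℝ) - e p h) := by
    intro h
    by_cases hinj : Function.Injective h
    · rw [if_pos hinj, Finset.prod_congr rfl (fun p hp => ?_), Finset.prod_const_one, mul_one]
      have hne : p.1 ≠ p.2 := (Finset.mem_offDiag.1 hp).2.2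
      rw [he]
      simp only [if_neg (fun hc => hne (hinj hc))]
      ring
    · rw [if_neg hinj]
      obtain ⟨x, y, hxy, hne⟩ := Function.not_injective_iff.1 hinj
      have hmem : (x, y) ∈ D := Finset.mem_offDiag.2 ⟨Finset.mem_univ _, Finset.mem_univ _, hne⟩
      rw [Finset.prod_eq_zero hmem (by rw [he]; simp [hxy]), mul_zero]
  have h2 : ∀ h : V → Fin N, ∏ p ∈ D, ((1:ℝ) - e p h)
      = ∑ E ∈ D.powerset, (-1:ℝ)^E.card * ∏ p ∈ E, e p h := by
    intro h
    calc ∏ p ∈ D, ((1:ℝ) - e p h) = ∏ p ∈ D, (-(e p h) + 1) := by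
          apply Finset.prod_congr rfl; intro p _; ring
      _ = ∑ E ∈ D.powerset, (∏ p ∈ E, -(e p h)) * ∏ p ∈ D \ E, (1:ℝ) := Finset.prod_add _ _ _
      _ = ∑ E ∈ D.powerset, (-1:ℝ)^E.card * ∏ p ∈ E, e p h := by
          apply Finset.sum_congr rfl
          intro E _
          rw [Finset.prod_const_one, mul_one]
          rw [show (fun p => -(e p h)) = (fun p => (-1:ℝ) * e p h) from funext (fun p => by ring)]
          rw [Finset.prod_mul_distrib, Finset.prod_const]
  -- rewrite total sum
  have h3 : ∑ h : V → Fin N, (if Function.Injective h then G h else 0)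
      = ∑ E ∈ D.powerset, (-1:ℝ)^E.card * ∑ h : V → Fin N, G h * ∏ p ∈ E, e p h := by
    rw [Fintype.sum_congr _ _ (fun h => by rw [h1 h, h2 h, Finset.mul_sum])]
    rw [Finset.sum_comm]
    apply Finset.sum_congr rfl
    intro E _
    rw [Finset.mul_sum]
    apply Finset.sum_congr rfl
    intro h _
    ring
  -- per-E identification with a quotient sum
  have h4 : ∀ E ∈ D.powerset, |∑ h : V → Fin N, G h * ∏ p ∈ E, e p h| ≤ B := by
    intro E _
    set st : Setoid V := Relation.EqvGen.setoid (fun u v : V => (u, v) ∈ E) with hst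
    letI : DecidableEq (Quotient st) := Classical.decEq _
    letI : Fintype (Quotient st) := Fintype.ofFinite _
    have hresp : ∀ (h : V → Fin N), (∀ p ∈ E, h p.1 = h p.2) →
        ∀ u v, Relation.EqvGen (fun u v : V => (u, v) ∈ E) u v → h u = h v := by
      intro h hh u v huv
      induction huv with
      | rel u v r => exact hh (u, v) r
      | refl u => rfl
      | symm u v _ ih => exact ih.symm
      | trans u v w _ _ ih1 ih2 => exact ih1.trans ih2
    have key : ∑ h : V → Fin N, G h * ∏ p ∈ E, e p h
        = ∑ ψ : Quotient st → Fin N, G (fun v => ψ (Quotient.mk st v)) := by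
      have hprod : ∀ h : V → Fin N, ∏ p ∈ E, e p h
          = if (∀ p ∈ E, h p.1 = h p.2) then (1:ℝ) else 0 := by
        intro h
        by_cases hc : ∀ p ∈ E, h p.1 = h p.2
        · rw [if_pos hc]
          apply Finset.prod_eq_one
          intro p hp
          rw [he]; simp [hc p hp]
        · rw [if_neg hc]
          push_neg at hc
          obtain ⟨p, hp, hne⟩ := hc
          exact Finset.prod_eq_zero hp (by rw [he]; simp [hne])
      calc ∑ h : V → Fin N, G h * ∏ p ∈ E, e p h
          = ∑ h ∈ Finset.univ.filter (fun h : V → Fin N => ∀ p ∈ E, h p.1 = h p.2), G h := by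
            rw [Finset.sum_filter]
            apply Finset.sum_congr rfl
            intro h _
            rw [hprod h]
            by_cases hc : ∀ p ∈ E, h p.1 = h p.2 <;> simp [hc]
        _ = ∑ ψ : Quotient st → Fin N, G (fun v => ψ (Quotient.mk st v)) := by
            refine Finset.sum_bij'
              (i := fun (h : V → Fin N) (hh : h ∈ Finset.univ.filter
                  (fun h : V → Fin N => ∀ p ∈ E, h p.1 = h p.2)) => fun c : Quotient st =>
                Quotient.lift h (fun u v huv => hresp h (by
                  simpa using hh) u v huv) c)
              (j := fun (ψ : Quotient st → Fin N) _ => fun v => ψ (Quotient.mk st v))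
              ?_ ?_ ?_ ?_ ?_
            · intros h hh; exact Finset.mem_univ _
            · intros ψ hψ
              simp only [Finset.mem_filter, Finset.mem_univ, true_and]
              intro p hp
              exact congrArg ψ (Quotient.sound (Relation.EqvGen.rel _ _ hp))
            · intros h hh
              funext v
              rfl
            · intros ψ hψ
              funext c
              obtain ⟨v, rfl⟩ := Quotient.exists_rep c
              rfl
            · intros h hh
              rfl
    rw [key]
    exact hB (Quotient st) (fun v => Quotient.mk st v) (Quotient.mk_surjective)
  have hB0 : 0 ≤ B := le_trans (abs_nonneg _) (hB V id Function.surjective_id)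
  calc |∑ h : V → Fin N, if Function.Injective h then G h else 0|
      ≤ ∑ E ∈ D.powerset, |(-1:ℝ)^E.card * ∑ h : V → Fin N, G h * ∏ p ∈ E, e p h| := by
        rw [h3]; exact Finset.abs_sum_le_sum_abs _ _
    _ ≤ ∑ E ∈ D.powerset, B := by
        apply Finset.sum_le_sum
        intro E hE
        rw [abs_mul, abs_pow, abs_neg, abs_one, one_pow, one_mul]
        exact h4 E hE
    _ = (D.powerset.card : ℝ) * B := by rw [Finset.sum_const, nsmul_eq_mul]
    _ ≤ 2 ^ (Fintype.card V * Fintype.card V) * B := by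
        apply mul_le_mul_of_nonneg_right _ hB0
        rw [Finset.card_powerset]
        have h5 : D.card ≤ Fintype.card V * Fintype.card V := by
          rw [hD, Finset.offDiag_card]
          simp only [Finset.card_univ]
          omega
        calc ((2 ^ D.card : ℕ) : ℝ) ≤ ((2 ^ (Fintype.card V * Fintype.card V) : ℕ) : ℝ) := by
              exact_mod_cast Nat.pow_le_pow_right (by norm_num) h5
          _ = 2 ^ (Fintype.card V * Fintype.card V) := by push_cast; ring

lemma single_bound {N n m : ℕ} (hN : 1 ≤ N) (hnm : n = 2*m) {V C : Type}
    [Fintype V] [Fintype C] [DecidableEq C]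
    (q : V → C) (hq : Function.Surjective q) (α : Fin n → V) (hcov : ∀ v : V, ∃ t, α t = v)
    (s : Fin N → ℝ) (M : ℝ) (hM0 : 0 ≤ M) (habs : ∀ x, |s x| ≤ M) (hsum : ∑ x, s x = 0) :
    |∑ ψ : C → Fin N, ∏ t, s (ψ (q (α t)))| ≤ (N:ℝ) ^ (min (Fintype.card V) m) * M ^ n := by
  classical
  set K : C → ℕ := fun c => (Finset.univ.filter (fun t => q (α t) = c)).card with hK
  have hre : ∀ ψ : C → Fin N, ∏ t, s (ψ (q (α t))) = ∏ c : C, (s (ψ c)) ^ (K c) := by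
    intro ψ
    rw [Finset.prod_comp (fun c => s (ψ c)) (fun t => q (α t))]
    apply Finset.prod_subset (Finset.subset_univ _)
    intro c _ hc
    have h0 : (Finset.univ.filter (fun a => q (α a) = c)).card = 0 := by
      simp only [Finset.card_eq_zero, Finset.filter_eq_empty_iff]
      intro t _
      intro hqc
      exact hc (Finset.mem_image.2 ⟨t, Finset.mem_univ t, hqc⟩)
    rw [h0, pow_zero]
  have hswap : ∑ ψ : C → Fin N, ∏ t, s (ψ (q (α t)))
      = ∏ c : C, ∑ x : Fin N, (s x) ^ (K c) := by
    rw [Finset.prod_univ_sum]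
    exact Fintype.sum_congr _ _ hre
  rw [hswap]
  have hKsum : ∑ c : C, K c = n := by
    rw [hK]
    have := Finset.card_eq_sum_card_fiberwise
      (f := fun t : Fin n => q (α t)) (s := Finset.univ) (t := Finset.univ)
      (fun t _ => Finset.mem_univ _)
    simpa using this.symm
  by_cases hone : ∃ c : C, K c = 1
  · obtain ⟨c₀, hc₀⟩ := hone
    rw [Finset.prod_eq_zero (Finset.mem_univ c₀) (by rw [hc₀]; simpa using hsum)]
    rw [abs_zero]
    positivity
  · push_neg at hone
    have hK2 : ∀ c : C, 2 ≤ K c := by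
      intro c
      obtain ⟨v, hv⟩ := hq c
      obtain ⟨t, ht⟩ := hcov v
      have h1 : 1 ≤ K c := by
        rw [hK]
        rw [Nat.succ_le_iff, Finset.card_pos]
        exact ⟨t, Finset.mem_filter.2 ⟨Finset.mem_univ _, by rw [ht, hv]⟩⟩
      have hne := hone c
      omega
  -- cardinality bound
    have hcC : Fintype.card C ≤ min (Fintype.card V) m := by
      refine le_min (Fintype.card_le_of_surjective q hq) ?_
      have : 2 * Fintype.card C ≤ n := by
        calc 2 * Fintype.card C = ∑ _c : C, 2 := by rw [Finset.sum_const]; simp [mul_comm]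
          _ ≤ ∑ c : C, K c := Finset.sum_le_sum (fun c _ => hK2 c)
          _ = n := hKsum
      omega
    calc |∏ c : C, ∑ x : Fin N, (s x) ^ (K c)|
        = ∏ c : C, |∑ x : Fin N, (s x) ^ (K c)| := by rw [Finset.abs_prod]
      _ ≤ ∏ c : C, (N:ℝ) * M ^ (K c) := by
          apply Finset.prod_le_prod (fun c _ => abs_nonneg _)
          intro c _
          calc |∑ x : Fin N, (s x) ^ (K c)| ≤ ∑ x : Fin N, |(s x) ^ (K c)| :=
                Finset.abs_sum_le_sum_abs _ _
            _ ≤ ∑ _x : Fin N, M ^ (K c) := by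
                apply Finset.sum_le_sum
                intro x _
                rw [abs_pow]
                exact pow_le_pow_left₀ (abs_nonneg _) (habs x) _
            _ = (N:ℝ) * M ^ (K c) := by rw [Finset.sum_const]; simp [Fintype.card_fin]
      _ = (N:ℝ) ^ (Fintype.card C) * M ^ n := by
          rw [Finset.prod_mul_distrib, Finset.prod_const, Finset.prod_pow_eq_pow_sum]
          · rw [hKsum]; simp [Finset.card_univ]
      _ ≤ (N:ℝ) ^ (min (Fintype.card V) m) * M ^ n := by
          apply mul_le_mul_of_nonneg_right _ (by positivity)
          apply pow_le_pow_right₀ (by exact_mod_cast hN) hcC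

/-- If some class is hit by exactly the `α`-slot of `t₀` and nothing else,
the free sum vanishes thanks to zero column sums. -/
lemma pair_vanish {N n : ℕ} (hN : 1 ≤ N) {C : Type} [Fintype C] [DecidableEq C]
    (f g : Fin n → C) (b : Fin N → Fin N → ℝ)
    (hcol : ∀ y : Fin N, ∑ x : Fin N, b x y = 0)
    (c₀ : C) (t₀ : Fin n) (h1 : f t₀ = c₀) (h2 : g t₀ ≠ c₀)
    (h3 : ∀ t, t ≠ t₀ → f t ≠ c₀ ∧ g t ≠ c₀) :
    ∑ ψ : C → Fin N, ∏ t, b (ψ (f t)) (ψ (g t)) = 0 := by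
  classical
  set E := (Equiv.funSplitAt c₀ (Fin N)).symm with hE
  set P : Fin N → ({c // c ≠ c₀} → Fin N) → ℝ :=
    fun x ψ' => ∏ t ∈ Finset.univ.erase t₀, b ((E (x, ψ')) (f t)) ((E (x, ψ')) (g t)) with hP
  have hEapp : ∀ (x : Fin N) (ψ' : {c // c ≠ c₀} → Fin N) (c : C) (hc : c ≠ c₀),
      (E (x, ψ')) c = ψ' ⟨c, hc⟩ := by
    intro x ψ' c hc
    rw [hE]
    simp only [Equiv.funSplitAt, Equiv.piSplitAt, Equiv.coe_fn_symm_mk]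
    rw [dif_neg hc]
  have hEc₀ : ∀ (x : Fin N) (ψ' : {c // c ≠ c₀} → Fin N), (E (x, ψ')) c₀ = x := by
    intro x ψ'
    rw [hE]
    simp only [Equiv.funSplitAt, Equiv.piSplitAt, Equiv.coe_fn_symm_mk]
    simp
  have hsplit : ∀ (x : Fin N) (ψ' : {c // c ≠ c₀} → Fin N),
      ∏ t, b ((E (x, ψ')) (f t)) ((E (x, ψ')) (g t))
        = b x (ψ' ⟨g t₀, h2⟩) * P x ψ' := by
    intro x ψ'
    rw [← Finset.mul_prod_erase Finset.univ _ (Finset.mem_univ t₀), hP]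
    congr 1
    rw [h1, hEc₀, hEapp x ψ' (g t₀) h2]
  have hPconst : ∀ (x x' : Fin N) (ψ' : {c // c ≠ c₀} → Fin N), P x ψ' = P x' ψ' := by
    intro x x' ψ'
    rw [hP]
    apply Finset.prod_congr rfl
    intro t ht
    have htne : t ≠ t₀ := (Finset.mem_erase.1 ht).1
    rw [hEapp x ψ' (f t) (h3 t htne).1, hEapp x ψ' (g t) (h3 t htne).2,
      hEapp x' ψ' (f t) (h3 t htne).1, hEapp x' ψ' (g t) (h3 t htne).2]
  have x₀ : Fin N := ⟨0, hN⟩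
  calc ∑ ψ : C → Fin N, ∏ t, b (ψ (f t)) (ψ (g t))
      = ∑ p : Fin N × ({c // c ≠ c₀} → Fin N),
          ∏ t, b ((E p) (f t)) ((E p) (g t)) := by
        rw [← E.sum_comp]
    _ = ∑ x : Fin N, ∑ ψ' : {c // c ≠ c₀} → Fin N, b x (ψ' ⟨g t₀, h2⟩) * P x₀ ψ' := by
        rw [Fintype.sum_prod_type]
        apply Finset.sum_congr rfl
        intro x _
        apply Finset.sum_congr rfl
        intro ψ' _
        rw [hsplit x ψ', hPconst x x₀ ψ']
    _ = ∑ ψ' : {c // c ≠ c₀} → Fin N, (∑ x : Fin N, b x (ψ' ⟨g t₀, h2⟩)) * P x₀ ψ' := by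
        rw [Finset.sum_comm]
        apply Finset.sum_congr rfl
        intro ψ' _
        rw [Finset.sum_mul]
    _ = 0 := by
        apply Finset.sum_eq_zero
        intro ψ' _
        rw [hcol, zero_mul]

lemma pair_bound {N n : ℕ} (hN : 1 ≤ N) {V C : Type} [Fintype V] [Fintype C] [DecidableEq C]
    (q : V → C) (hq : Function.Surjective q) (α β : Fin n → V)
    (hcov : ∀ v : V, ∃ t, α t = v ∨ β t = v)
    (b : Fin N → Fin N → ℝ) (M : ℝ) (hM0 : 0 ≤ M) (habs : ∀ x y, |b x y| ≤ M)
    (hrow : ∀ x : Fin N, ∑ y, b x y = 0) (hcol : ∀ y : Fin N, ∑ x, b x y = 0) :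
    |∑ ψ : C → Fin N, ∏ t, b (ψ (q (α t))) (ψ (q (β t)))|
      ≤ (N:ℝ) ^ (min (Fintype.card V) n) * M ^ n := by
  classical
  set sl : Fin n × Bool → C := fun z => if z.2 then q (β z.1) else q (α z.1) with hsl
  by_cases hone : ∃ c₀ : C, (Finset.univ.filter (fun z => sl z = c₀)).card = 1
  · obtain ⟨c₀, hc₀⟩ := hone
    obtain ⟨z₀, hz₀⟩ := Finset.card_eq_one.1 hc₀
    have hz₀mem : z₀ ∈ Finset.univ.filter (fun z => sl z = c₀) := by rw [hz₀]; exact Finset.mem_singleton_self _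
    have hz₀sl : sl z₀ = c₀ := (Finset.mem_filter.1 hz₀mem).2
    have huniq : ∀ z, sl z = c₀ → z = z₀ := by
      intro z hz
      have : z ∈ Finset.univ.filter (fun z => sl z = c₀) :=
        Finset.mem_filter.2 ⟨Finset.mem_univ _, hz⟩
      rw [hz₀] at this
      exact Finset.mem_singleton.1 this
    rcases Bool.eq_false_or_eq_true z₀.2 with hb2 | hb2
    · -- unique slot is a β-slot of t₀ := z₀.1  (z₀.2 = true)
      have hzz : z₀ = (z₀.1, true) := by rw [← hb2]
      have h1 : q (β z₀.1) = c₀ := by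
        rw [← hz₀sl, hsl, hzz]; simp
      have h2 : q (α z₀.1) ≠ c₀ := by
        intro hc
        have : ((z₀.1, false) : Fin n × Bool) = z₀ := huniq _ (by rw [hsl]; simpa using hc)
        rw [hzz] at this
        simpa using congrArg Prod.snd this
      have h3 : ∀ t, t ≠ z₀.1 → q (β t) ≠ c₀ ∧ q (α t) ≠ c₀ := by
        intro t ht
        constructor
        · intro hc
          have : ((t, true) : Fin n × Bool) = z₀ := huniq _ (by rw [hsl]; simpa using hc)
          rw [hzz] at this
          exact ht (congrArg Prod.fst this)
        · intro hc
          have : ((t, false) : Fin n × Bool) = z₀ := huniq _ (by rw [hsl]; simpa using hc)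
          rw [hzz] at this
          simpa using congrArg Prod.snd this
      have hv := pair_vanish hN (fun t => q (β t)) (fun t => q (α t)) (fun x y => b y x) hrow
        c₀ z₀.1 h1 h2 h3
      rw [show ∑ ψ : C → Fin N, ∏ t, b (ψ (q (α t))) (ψ (q (β t)))
          = ∑ ψ : C → Fin N, ∏ t, (fun x y => b y x) (ψ (q (β t))) (ψ (q (α t))) from rfl,
        hv, abs_zero]
      positivity
    · -- unique slot is an α-slot  (z₀.2 = false)
      have hzz : z₀ = (z₀.1, false) := by rw [← hb2]
      have h1 : q (α z₀.1) = c₀ := by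
        rw [← hz₀sl, hsl, hzz]; simp
      have h2 : q (β z₀.1) ≠ c₀ := by
        intro hc
        have : ((z₀.1, true) : Fin n × Bool) = z₀ := huniq _ (by rw [hsl]; simpa using hc)
        rw [hzz] at this
        simpa using congrArg Prod.snd this
      have h3 : ∀ t, t ≠ z₀.1 → q (α t) ≠ c₀ ∧ q (β t) ≠ c₀ := by
        intro t ht
        constructor
        · intro hc
          have : ((t, false) : Fin n × Bool) = z₀ := huniq _ (by rw [hsl]; simpa using hc)
          rw [hzz] at this
          exact ht (congrArg Prod.fst this)
        · intro hc
          have : ((t, true) : Fin n × Bool) = z₀ := huniq _ (by rw [hsl]; simpa using hc)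
          rw [hzz] at this
          simpa using congrArg Prod.snd this
      rw [pair_vanish hN (fun t => q (α t)) (fun t => q (β t)) b hcol c₀ z₀.1 h1 h2 h3,
        abs_zero]
      positivity
  · -- all classes have at least two slots
    push_neg at hone
    have hdeg1 : ∀ c : C, 1 ≤ (Finset.univ.filter (fun z => sl z = c)).card := by
      intro c
      obtain ⟨v, hv⟩ := hq c
      obtain ⟨t, ht⟩ := hcov v
      rw [Nat.succ_le_iff, Finset.card_pos]
      rcases ht with ht | ht
      · exact ⟨(t, false), Finset.mem_filter.2 ⟨Finset.mem_univ _, by rw [hsl]; simp [ht, hv]⟩⟩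
      · exact ⟨(t, true), Finset.mem_filter.2 ⟨Finset.mem_univ _, by rw [hsl]; simp [ht, hv]⟩⟩
    have hdeg2 : ∀ c : C, 2 ≤ (Finset.univ.filter (fun z => sl z = c)).card := by
      intro c
      have := hdeg1 c
      have := hone c
      omega
    have hsum : ∑ c : C, (Finset.univ.filter (fun z => sl z = c)).card = 2 * n := by
      have := Finset.card_eq_sum_card_fiberwise
        (f := sl) (s := Finset.univ) (t := Finset.univ) (fun z _ => Finset.mem_univ _)
      have h2 : (Finset.univ : Finset (Fin n × Bool)).card = 2 * n := by
        simp [Finset.card_univ, mul_comm]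
      rw [← h2]
      exact this.symm
    have hcC : Fintype.card C ≤ min (Fintype.card V) n := by
      refine le_min (Fintype.card_le_of_surjective q hq) ?_
      have : 2 * Fintype.card C ≤ 2 * n := by
        calc 2 * Fintype.card C = ∑ _c : C, 2 := by rw [Finset.sum_const]; simp [mul_comm]
          _ ≤ ∑ c : C, (Finset.univ.filter (fun z => sl z = c)).card :=
              Finset.sum_le_sum (fun c _ => hdeg2 c)
          _ = 2 * n := hsum
      omega
    calc |∑ ψ : C → Fin N, ∏ t, b (ψ (q (α t))) (ψ (q (β t)))|
        ≤ ∑ ψ : C → Fin N, |∏ t, b (ψ (q (α t))) (ψ (q (β t)))| := Finset.abs_sum_le_sum_abs _ _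
      _ ≤ ∑ _ψ : C → Fin N, M ^ n := by
          apply Finset.sum_le_sum
          intro ψ _
          rw [Finset.abs_prod]
          calc ∏ t, |b (ψ (q (α t))) (ψ (q (β t)))| ≤ ∏ _t : Fin n, M :=
                Finset.prod_le_prod (fun t _ => abs_nonneg _) (fun t _ => habs _ _)
            _ = M ^ n := by rw [Finset.prod_const]; simp
      _ = (Fintype.card (C → Fin N) : ℝ) * M ^ n := by
          rw [Finset.sum_const, nsmul_eq_mul]; simp [Finset.card_univ]
      _ = ((N:ℝ) ^ (Fintype.card C)) * M ^ n := by
          rw [Fintype.card_fun]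
          push_cast
          simp
      _ ≤ (N:ℝ) ^ (min (Fintype.card V) n) * M ^ n := by
          apply mul_le_mul_of_nonneg_right _ (by positivity)
          exact pow_le_pow_right₀ (by exact_mod_cast hN) hcC
/-- Support of a pair-tuple. -/
def suppPair {N n : ℕ} (w : Fin n → Fin N × Fin N) : Finset (Fin N) :=
  Finset.univ.image (fun z : Fin n × Bool => if z.2 then (w z.1).2 else (w z.1).1)

lemma perm_pair_moment {N n : ℕ} (hN1 : 1 ≤ N) (w : Fin n → Fin N × Fin N)
    (b : Fin N → Fin N → ℝ) (M : ℝ) (hM0 : 0 ≤ M) (habs : ∀ x y, |b x y| ≤ M)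
    (hrow : ∀ x : Fin N, ∑ y, b x y = 0) (hcol : ∀ y : Fin N, ∑ x, b x y = 0) :
    |∑ π : Equiv.Perm (Fin N), ∏ t, b (π (w t).1) (π (w t).2)|
      ≤ ((N - (suppPair w).card).factorial : ℝ)
          * 2 ^ ((suppPair w).card * (suppPair w).card)
          * ((N:ℝ) ^ (min (suppPair w).card n) * M ^ n) := by
  classical
  set S := suppPair w with hS
  have hmem1 : ∀ t, (w t).1 ∈ S := by
    intro t
    rw [hS, suppPair]
    exact Finset.mem_image.2 ⟨(t, false), Finset.mem_univ _, by simp⟩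
  have hmem2 : ∀ t, (w t).2 ∈ S := by
    intro t
    rw [hS, suppPair]
    exact Finset.mem_image.2 ⟨(t, true), Finset.mem_univ _, by simp⟩
  set α : Fin n → {x // x ∈ S} := fun t => ⟨(w t).1, hmem1 t⟩ with hα
  set β : Fin n → {x // x ∈ S} := fun t => ⟨(w t).2, hmem2 t⟩ with hβ
  set G : ({x // x ∈ S} → Fin N) → ℝ :=
    fun h => ∏ t, b (h (α t)) (h (β t)) with hG
  set g : (Fin N → Fin N) → ℝ := fun f => ∏ t, b (f (w t).1) (f (w t).2) with hg
  have hginv : ∀ f₁ f₂ : Fin N → Fin N, (∀ i ∈ S, f₁ i = f₂ i) → g f₁ = g f₂ := by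
    intro f₁ f₂ hff
    rw [hg]
    apply Finset.prod_congr rfl
    intro t _
    rw [hff _ (hmem1 t), hff _ (hmem2 t)]
  have hexch := exchange S g hginv
  have hGg : ∀ h : {x // x ∈ S} → Fin N, g (extFun S h) = G h := by
    intro h
    rw [hg, hG]
    apply Finset.prod_congr rfl
    intro t _
    rw [extFun_mem S h (hmem1 t), extFun_mem S h (hmem2 t)]
  have hcov : ∀ x : {x // x ∈ S}, ∃ t, α t = x ∨ β t = x := by
    rintro ⟨x, hx⟩
    have hx' := hx
    rw [hS, suppPair] at hx'
    obtain ⟨z, _, hz⟩ := Finset.mem_image.1 hx'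
    rcases Bool.eq_false_or_eq_true z.2 with hb | hb
    · refine ⟨z.1, Or.inr ?_⟩
      apply Subtype.ext
      simp only [hb, if_true] at hz
      exact hz
    · refine ⟨z.1, Or.inl ?_⟩
      apply Subtype.ext
      simp only [hb, Bool.false_eq_true, if_false] at hz
      exact hz
  have hcard : Fintype.card {x // x ∈ S} = S.card := Fintype.card_coe S
  have hbound := inj_sum_bound {x // x ∈ S} G ((N:ℝ) ^ (min S.card n) * M ^ n) ?hB
  case hB =>
    intro C instF instD q hq
    have h := pair_bound hN1 q hq α β hcov b M hM0 habs hrow hcol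
    rw [hcard] at h
    simpa only [hG] using h
  rw [hcard] at hbound
  have hrw : ∑ π : Equiv.Perm (Fin N), ∏ t, b (π (w t).1) (π (w t).2)
      = ∑ π : Equiv.Perm (Fin N), g ⇑π := by
    apply Finset.sum_congr rfl
    intro π _
    rw [hg]
  have hfact0 : (0:ℝ) ≤ ((N - S.card).factorial : ℝ) := by positivity
  have hsum_eq : (∑ h : {x // x ∈ S} → Fin N, if Function.Injective h then g (extFun S h) else 0)
      = ∑ h : {x // x ∈ S} → Fin N, if Function.Injective h then G h else 0 :=
    Finset.sum_congr rfl (fun h _ => by rw [hGg h])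
  rw [hrw, hexch, hsum_eq, abs_mul, abs_of_nonneg hfact0, mul_assoc]
  exact mul_le_mul_of_nonneg_left hbound hfact0

lemma perm_single_moment {N n m : ℕ} (hN1 : 1 ≤ N) (hnm : n = 2*m) (u : Fin n → Fin N)
    (s : Fin N → ℝ) (M : ℝ) (hM0 : 0 ≤ M) (habs : ∀ x, |s x| ≤ M)
    (hsum : ∑ x, s x = 0) :
    |∑ π : Equiv.Perm (Fin N), ∏ t, s (π (u t))|
      ≤ ((N - (Finset.image u Finset.univ).card).factorial : ℝ)
          * 2 ^ ((Finset.image u Finset.univ).card * (Finset.image u Finset.univ).card)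
          * ((N:ℝ) ^ (min (Finset.image u Finset.univ).card m) * M ^ n) := by
  classical
  set S := Finset.image u Finset.univ with hS
  have hmem : ∀ t, u t ∈ S := by
    intro t
    rw [hS]
    exact Finset.mem_image.2 ⟨t, Finset.mem_univ _, rfl⟩
  set α : Fin n → {x // x ∈ S} := fun t => ⟨u t, hmem t⟩ with hα
  set G : ({x // x ∈ S} → Fin N) → ℝ := fun h => ∏ t, s (h (α t)) with hG
  set g : (Fin N → Fin N) → ℝ := fun f => ∏ t, s (f (u t)) with hg
  have hginv : ∀ f₁ f₂ : Fin N → Fin N, (∀ i ∈ S, f₁ i = f₂ i) → g f₁ = g f₂ := by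
    intro f₁ f₂ hff
    rw [hg]
    apply Finset.prod_congr rfl
    intro t _
    rw [hff _ (hmem t)]
  have hexch := exchange S g hginv
  have hGg : ∀ h : {x // x ∈ S} → Fin N, g (extFun S h) = G h := by
    intro h
    rw [hg, hG]
    apply Finset.prod_congr rfl
    intro t _
    rw [extFun_mem S h (hmem t)]
  have hcov : ∀ x : {x // x ∈ S}, ∃ t, α t = x := by
    rintro ⟨x, hx⟩
    have hx' := hx
    rw [hS] at hx'
    obtain ⟨t, _, ht⟩ := Finset.mem_image.1 hx'
    exact ⟨t, Subtype.ext ht⟩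
  have hcard : Fintype.card {x // x ∈ S} = S.card := Fintype.card_coe S
  have hbound := inj_sum_bound {x // x ∈ S} G ((N:ℝ) ^ (min S.card m) * M ^ n) ?hB
  case hB =>
    intro C instF instD q hq
    have h := single_bound hN1 hnm q hq α hcov s M hM0 habs hsum
    rw [hcard] at h
    simpa only [hG] using h
  rw [hcard] at hbound
  have hrw : ∑ π : Equiv.Perm (Fin N), ∏ t, s (π (u t))
      = ∑ π : Equiv.Perm (Fin N), g ⇑π := by
    apply Finset.sum_congr rfl
    intro π _
    rw [hg]
  have hfact0 : (0:ℝ) ≤ ((N - S.card).factorial : ℝ) := by positivity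
  have hsum_eq : (∑ h : {x // x ∈ S} → Fin N, if Function.Injective h then g (extFun S h) else 0)
      = ∑ h : {x // x ∈ S} → Fin N, if Function.Injective h then G h else 0 :=
    Finset.sum_congr rfl (fun h _ => by rw [hGg h])
  rw [hrw, hexch, hsum_eq, abs_mul, abs_of_nonneg hfact0, mul_assoc]
  exact mul_le_mul_of_nonneg_left hbound hfact0

/-- Tuples-of-pairs reindexing equivalence. -/
def pairEquiv (N n : ℕ) : (Fin n → Fin N × Fin N) ≃ (Fin n × Bool → Fin N) where
  toFun w := fun z => if z.2 then (w z.1).2 else (w z.1).1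
  invFun u := fun t => (u (t, false), u (t, true))
  left_inv w := by funext t; simp
  right_inv u := by
    funext z
    rcases Bool.eq_false_or_eq_true z.2 with hb | hb
    · rcases z with ⟨t, o⟩
      simp only at hb
      subst hb
      simp
    · rcases z with ⟨t, o⟩
      simp only at hb
      subst hb
      simp

lemma total_pair {N n : ℕ} (hn1 : 1 ≤ n) (hN : 4*n ≤ N)
    (A : Fin N × Fin N → ℝ) (b : Fin N → Fin N → ℝ) (Ma Mb : ℝ)
    (hMa0 : 0 ≤ Ma) (hMb0 : 0 ≤ Mb)
    (hAabs : ∀ p, |A p| ≤ Ma) (hbabs : ∀ x y, |b x y| ≤ Mb)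
    (hrow : ∀ x : Fin N, ∑ y, b x y = 0) (hcol : ∀ y : Fin N, ∑ x, b x y = 0) :
    |∑ π : Equiv.Perm (Fin N), (∑ p : Fin N × Fin N, A p * b (π p.1) (π p.2)) ^ n|
      ≤ (N.factorial : ℝ) * (2^(4*n*n + 2*n) * (2*n).factorial) * (N:ℝ)^n * Ma^n * Mb^n := by
  classical
  have hN1 : 1 ≤ N := by omega
  have hNR : (0:ℝ) < N := by exact_mod_cast (by omega : 0 < N)
  -- expand the power
  have hexpand : ∀ π : Equiv.Perm (Fin N),
      (∑ p : Fin N × Fin N, A p * b (π p.1) (π p.2)) ^ n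
      = ∑ w : Fin n → Fin N × Fin N,
          (∏ t, A (w t)) * ∏ t, b (π (w t).1) (π (w t).2) := by
    intro π
    rw [Fintype.sum_pow]
    apply Finset.sum_congr rfl
    intro w _
    rw [← Finset.prod_mul_distrib]
  have hswap : ∑ π : Equiv.Perm (Fin N), (∑ p : Fin N × Fin N, A p * b (π p.1) (π p.2)) ^ n
      = ∑ w : Fin n → Fin N × Fin N,
          (∏ t, A (w t)) * ∑ π : Equiv.Perm (Fin N), ∏ t, b (π (w t).1) (π (w t).2) := by
    rw [Fintype.sum_congr _ _ hexpand, Finset.sum_comm]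
    apply Finset.sum_congr rfl
    intro w _
    rw [Finset.mul_sum]
  rw [hswap]
  -- per-tuple bound
  have hv2n : ∀ w : Fin n → Fin N × Fin N, (suppPair w).card ≤ 2*n := by
    intro w
    calc (suppPair w).card ≤ (Finset.univ : Finset (Fin n × Bool)).card := Finset.card_image_le
      _ = 2*n := by simp [Finset.card_univ, mul_comm]
  have hper : ∀ w : Fin n → Fin N × Fin N,
      |(∏ t, A (w t)) * ∑ π : Equiv.Perm (Fin N), ∏ t, b (π (w t).1) (π (w t).2)|
      ≤ Ma^n * Mb^n * (N.factorial : ℝ) * 2^(4*n*n + 2*n) * (N:ℝ)^n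
          * ((N:ℝ)⁻¹)^((suppPair w).card) := by
    intro w
    set v := (suppPair w).card with hv
    rw [abs_mul]
    have h1 : |∏ t, A (w t)| ≤ Ma^n := by
      rw [Finset.abs_prod]
      calc ∏ t, |A (w t)| ≤ ∏ _t : Fin n, Ma :=
            Finset.prod_le_prod (fun t _ => abs_nonneg _) (fun t _ => hAabs _)
        _ = Ma^n := by rw [Finset.prod_const]; simp
    have h2 := perm_pair_moment hN1 w b Mb hMb0 hbabs hrow hcol
    have h3 : ((N - v).factorial : ℝ) * 2 ^ (v*v) * ((N:ℝ) ^ (min v n) * Mb ^ n)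
        ≤ Mb^n * (N.factorial : ℝ) * 2^(4*n*n + 2*n) * (N:ℝ)^n * ((N:ℝ)⁻¹)^v := by
      have hfb := fact_bound (show 2*v ≤ N by have := hv2n w; omega)
      have hfb' : ((N - v).factorial : ℝ) ≤ (N.factorial : ℝ) * 2^(2*n) * ((N:ℝ)⁻¹)^v := by
        rw [inv_pow]
        calc ((N - v).factorial : ℝ)
            = (((N - v).factorial : ℝ) * (N:ℝ)^v) * ((N:ℝ)^v)⁻¹ := by field_simp
          _ ≤ ((N.factorial : ℝ) * 2^v) * ((N:ℝ)^v)⁻¹ :=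
              mul_le_mul_of_nonneg_right hfb (by positivity)
          _ ≤ ((N.factorial : ℝ) * 2^(2*n)) * ((N:ℝ)^v)⁻¹ := by
              apply mul_le_mul_of_nonneg_right _ (by positivity)
              apply mul_le_mul_of_nonneg_left _ (by positivity)
              exact pow_le_pow_right₀ (by norm_num) (hv2n w)
          _ = (N.factorial : ℝ) * 2^(2*n) * ((N:ℝ)^v)⁻¹ := by ring
      have e2 : (2:ℝ)^(v*v) ≤ 2^(4*n*n) := by
        apply pow_le_pow_right₀ (by norm_num)
        have := hv2n w
        calc v*v ≤ (2*n)*(2*n) := Nat.mul_le_mul this this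
          _ = 4*n*n := by ring
      have e3 : (N:ℝ)^(min v n) ≤ (N:ℝ)^n := by
        apply pow_le_pow_right₀ (by exact_mod_cast hN1)
        exact min_le_right _ _
      calc ((N - v).factorial : ℝ) * 2 ^ (v*v) * ((N:ℝ) ^ (min v n) * Mb ^ n)
          ≤ ((N.factorial : ℝ) * 2^(2*n) * ((N:ℝ)⁻¹)^v) * 2 ^ (4*n*n) * ((N:ℝ)^n * Mb ^ n) := by
            apply mul_le_mul
            · exact mul_le_mul hfb' e2 (by positivity) (by positivity)
            · exact mul_le_mul_of_nonneg_right e3 (by positivity)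
            · positivity
            · positivity
        _ = Mb^n * (N.factorial : ℝ) * 2^(4*n*n + 2*n) * (N:ℝ)^n * ((N:ℝ)⁻¹)^v := by
            rw [pow_add]
            ring
    calc |∏ t, A (w t)| * |∑ π : Equiv.Perm (Fin N), ∏ t, b (π (w t).1) (π (w t).2)|
        ≤ Ma^n * (((N - v).factorial : ℝ) * 2 ^ (v*v) * ((N:ℝ) ^ (min v n) * Mb ^ n)) := by
          apply mul_le_mul h1 h2 (abs_nonneg _) (by positivity)
      _ ≤ Ma^n * (Mb^n * (N.factorial : ℝ) * 2^(4*n*n + 2*n) * (N:ℝ)^n * ((N:ℝ)⁻¹)^v) :=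
          mul_le_mul_of_nonneg_left h3 (by positivity)
      _ = Ma^n * Mb^n * (N.factorial : ℝ) * 2^(4*n*n + 2*n) * (N:ℝ)^n * ((N:ℝ)⁻¹)^v := by ring
  -- counting
  have hcount : ∑ w : Fin n → Fin N × Fin N, ((N:ℝ)⁻¹)^((suppPair w).card)
      ≤ ((2*n).factorial : ℝ) := by
    have := count_aux' N (Fin n × Bool)
    have hc : Fintype.card (Fin n × Bool) = 2*n := by simp [mul_comm]
    rw [hc] at this
    refine le_trans (le_of_eq ?_) this
    rw [← Equiv.sum_comp (pairEquiv N n)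
      (fun u : Fin n × Bool → Fin N => ((N:ℝ)⁻¹)^((Finset.image u Finset.univ).card))]
    apply Fintype.sum_congr
    intro w
    rfl
  calc |∑ w : Fin n → Fin N × Fin N,
          (∏ t, A (w t)) * ∑ π : Equiv.Perm (Fin N), ∏ t, b (π (w t).1) (π (w t).2)|
      ≤ ∑ w : Fin n → Fin N × Fin N,
          |(∏ t, A (w t)) * ∑ π : Equiv.Perm (Fin N), ∏ t, b (π (w t).1) (π (w t).2)| :=
        Finset.abs_sum_le_sum_abs _ _
    _ ≤ ∑ w : Fin n → Fin N × Fin N,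
          Ma^n * Mb^n * (N.factorial : ℝ) * 2^(4*n*n + 2*n) * (N:ℝ)^n
            * ((N:ℝ)⁻¹)^((suppPair w).card) := Finset.sum_le_sum (fun w _ => hper w)
    _ = Ma^n * Mb^n * (N.factorial : ℝ) * 2^(4*n*n + 2*n) * (N:ℝ)^n
          * ∑ w : Fin n → Fin N × Fin N, ((N:ℝ)⁻¹)^((suppPair w).card) := by
        rw [Finset.mul_sum]
    _ ≤ Ma^n * Mb^n * (N.factorial : ℝ) * 2^(4*n*n + 2*n) * (N:ℝ)^n * ((2*n).factorial : ℝ) := by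
        apply mul_le_mul_of_nonneg_left hcount (by positivity)
    _ = (N.factorial : ℝ) * (2^(4*n*n + 2*n) * (2*n).factorial) * (N:ℝ)^n * Ma^n * Mb^n := by
        push_cast
        ring

lemma total_single {N n m : ℕ} (hnm : n = 2*m) (hm1 : 1 ≤ m) (hN : 4*n ≤ N)
    (r s : Fin N → ℝ) (Ma Mb : ℝ) (hMa0 : 0 ≤ Ma) (hMb0 : 0 ≤ Mb)
    (hrabs : ∀ x, |r x| ≤ Ma) (hsabs : ∀ x, |s x| ≤ Mb) (hsum : ∑ x, s x = 0) :
    |∑ π : Equiv.Perm (Fin N), (∑ i, r i * s (π i)) ^ n|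
      ≤ (N.factorial : ℝ) * (2^(n*n + 2*n) * n.factorial) * (N:ℝ)^m * Ma^n * Mb^n := by
  classical
  have hN1 : 1 ≤ N := by omega
  have hexpand : ∀ π : Equiv.Perm (Fin N),
      (∑ i, r i * s (π i)) ^ n
      = ∑ u : Fin n → Fin N, (∏ t, r (u t)) * ∏ t, s (π (u t)) := by
    intro π
    rw [Fintype.sum_pow]
    apply Finset.sum_congr rfl
    intro u _
    rw [← Finset.prod_mul_distrib]
  have hswap : ∑ π : Equiv.Perm (Fin N), (∑ i, r i * s (π i)) ^ n
      = ∑ u : Fin n → Fin N,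
          (∏ t, r (u t)) * ∑ π : Equiv.Perm (Fin N), ∏ t, s (π (u t)) := by
    rw [Fintype.sum_congr _ _ hexpand, Finset.sum_comm]
    apply Finset.sum_congr rfl
    intro u _
    rw [Finset.mul_sum]
  rw [hswap]
  have hvn : ∀ u : Fin n → Fin N, (Finset.image u Finset.univ).card ≤ n := by
    intro u
    calc (Finset.image u Finset.univ).card ≤ (Finset.univ : Finset (Fin n)).card :=
        Finset.card_image_le
      _ = n := by simp
  have hper : ∀ u : Fin n → Fin N,
      |(∏ t, r (u t)) * ∑ π : Equiv.Perm (Fin N), ∏ t, s (π (u t))|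
      ≤ Ma^n * Mb^n * (N.factorial : ℝ) * 2^(n*n + 2*n) * (N:ℝ)^m
          * ((N:ℝ)⁻¹)^((Finset.image u Finset.univ).card) := by
    intro u
    set v := (Finset.image u Finset.univ).card with hv
    rw [abs_mul]
    have h1 : |∏ t, r (u t)| ≤ Ma^n := by
      rw [Finset.abs_prod]
      calc ∏ t, |r (u t)| ≤ ∏ _t : Fin n, Ma :=
            Finset.prod_le_prod (fun t _ => abs_nonneg _) (fun t _ => hrabs _)
        _ = Ma^n := by rw [Finset.prod_const]; simp
    have h2 := perm_single_moment hN1 hnm u s Mb hMb0 hsabs hsum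
    have h3 : ((N - v).factorial : ℝ) * 2 ^ (v*v) * ((N:ℝ) ^ (min v m) * Mb ^ n)
        ≤ Mb^n * (N.factorial : ℝ) * 2^(n*n + 2*n) * (N:ℝ)^m * ((N:ℝ)⁻¹)^v := by
      have hfb := fact_bound (show 2*v ≤ N by have := hvn u; omega)
      have hfb' : ((N - v).factorial : ℝ) ≤ (N.factorial : ℝ) * 2^(2*n) * ((N:ℝ)⁻¹)^v := by
        rw [inv_pow]
        calc ((N - v).factorial : ℝ)
            = (((N - v).factorial : ℝ) * (N:ℝ)^v) * ((N:ℝ)^v)⁻¹ := by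
              have : (0:ℝ) < (N:ℝ)^v := by positivity
              field_simp
          _ ≤ ((N.factorial : ℝ) * 2^v) * ((N:ℝ)^v)⁻¹ :=
              mul_le_mul_of_nonneg_right hfb (by positivity)
          _ ≤ ((N.factorial : ℝ) * 2^(2*n)) * ((N:ℝ)^v)⁻¹ := by
              apply mul_le_mul_of_nonneg_right _ (by positivity)
              apply mul_le_mul_of_nonneg_left _ (by positivity)
              apply pow_le_pow_right₀ (by norm_num)
              have := hvn u
              omega
          _ = (N.factorial : ℝ) * 2^(2*n) * ((N:ℝ)^v)⁻¹ := by ring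
      have e2 : (2:ℝ)^(v*v) ≤ 2^(n*n) := by
        apply pow_le_pow_right₀ (by norm_num)
        exact Nat.mul_le_mul (hvn u) (hvn u)
      have e3 : (N:ℝ)^(min v m) ≤ (N:ℝ)^m := by
        apply pow_le_pow_right₀ (by exact_mod_cast hN1)
        exact min_le_right _ _
      calc ((N - v).factorial : ℝ) * 2 ^ (v*v) * ((N:ℝ) ^ (min v m) * Mb ^ n)
          ≤ ((N.factorial : ℝ) * 2^(2*n) * ((N:ℝ)⁻¹)^v) * 2 ^ (n*n) * ((N:ℝ)^m * Mb ^ n) := by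
            apply mul_le_mul
            · exact mul_le_mul hfb' e2 (by positivity) (by positivity)
            · exact mul_le_mul_of_nonneg_right e3 (by positivity)
            · positivity
            · positivity
        _ = Mb^n * (N.factorial : ℝ) * 2^(n*n + 2*n) * (N:ℝ)^m * ((N:ℝ)⁻¹)^v := by
            rw [pow_add]
            ring
    calc |∏ t, r (u t)| * |∑ π : Equiv.Perm (Fin N), ∏ t, s (π (u t))|
        ≤ Ma^n * (((N - v).factorial : ℝ) * 2 ^ (v*v) * ((N:ℝ) ^ (min v m) * Mb ^ n)) :=
          mul_le_mul h1 h2 (abs_nonneg _) (by positivity)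
      _ ≤ Ma^n * (Mb^n * (N.factorial : ℝ) * 2^(n*n + 2*n) * (N:ℝ)^m * ((N:ℝ)⁻¹)^v) :=
          mul_le_mul_of_nonneg_left h3 (by positivity)
      _ = Ma^n * Mb^n * (N.factorial : ℝ) * 2^(n*n + 2*n) * (N:ℝ)^m * ((N:ℝ)⁻¹)^v := by ring
  have hcount : ∑ u : Fin n → Fin N, ((N:ℝ)⁻¹)^((Finset.image u Finset.univ).card)
      ≤ (n.factorial : ℝ) := count_aux N n
  calc |∑ u : Fin n → Fin N, (∏ t, r (u t)) * ∑ π : Equiv.Perm (Fin N), ∏ t, s (π (u t))|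
      ≤ ∑ u : Fin n → Fin N,
          |(∏ t, r (u t)) * ∑ π : Equiv.Perm (Fin N), ∏ t, s (π (u t))| :=
        Finset.abs_sum_le_sum_abs _ _
    _ ≤ ∑ u : Fin n → Fin N, Ma^n * Mb^n * (N.factorial : ℝ) * 2^(n*n + 2*n) * (N:ℝ)^m
          * ((N:ℝ)⁻¹)^((Finset.image u Finset.univ).card) := Finset.sum_le_sum (fun u _ => hper u)
    _ = Ma^n * Mb^n * (N.factorial : ℝ) * 2^(n*n + 2*n) * (N:ℝ)^m
          * ∑ u : Fin n → Fin N, ((N:ℝ)⁻¹)^((Finset.image u Finset.univ).card) := by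
        rw [Finset.mul_sum]
    _ ≤ Ma^n * Mb^n * (N.factorial : ℝ) * 2^(n*n + 2*n) * (N:ℝ)^m * (n.factorial : ℝ) := by
        apply mul_le_mul_of_nonneg_left hcount (by positivity)
    _ = (N.factorial : ℝ) * (2^(n*n + 2*n) * n.factorial) * (N:ℝ)^m * Ma^n * Mb^n := by
        ring

lemma abs_le_arrMax {N : ℕ} (a : Fin N → Fin N → ℝ) (i j : Fin N) :
    |a i j| ≤ arrMax N a := by
  have h1 : |a i j| ≤ ⨆ j', |a i j'| :=
    le_ciSup (f := fun j' => |a i j'|) (Set.Finite.bddAbove (Set.finite_range _)) j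
  have h2 : (⨆ j', |a i j'|) ≤ ⨆ i', ⨆ j', |a i' j'| :=
    le_ciSup (f := fun i' => ⨆ j', |a i' j'|) (Set.Finite.bddAbove (Set.finite_range _)) i
  exact le_trans h1 h2

lemma arrMax_nonneg {N : ℕ} (hN : 1 ≤ N) (a : Fin N → Fin N → ℝ) : 0 ≤ arrMax N a := by
  have i : Fin N := ⟨0, hN⟩
  exact le_trans (abs_nonneg _) (abs_le_arrMax a i i)

lemma even_add_pow_le (m : ℕ) (x y : ℝ) :
    (x + y) ^ (2*m) ≤ 2 ^ (2*m) * (x ^ (2*m) + y ^ (2*m)) := by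
  have he : Even (2*m) := ⟨m, by ring⟩
  have h0 : (x + y) ^ (2*m) = |x + y| ^ (2*m) := (he.pow_abs _).symm
  have hx : x ^ (2*m) = |x| ^ (2*m) := (he.pow_abs _).symm
  have hy : y ^ (2*m) = |y| ^ (2*m) := (he.pow_abs _).symm
  rw [h0, hx, hy]
  have h1 : |x + y| ≤ 2 * max |x| |y| := by
    calc |x + y| ≤ |x| + |y| := abs_add_le x y
      _ ≤ max |x| |y| + max |x| |y| := add_le_add (le_max_left _ _) (le_max_right _ _)
      _ = 2 * max |x| |y| := by ring
  calc |x + y| ^ (2*m) ≤ (2 * max |x| |y|) ^ (2*m) :=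
        pow_le_pow_left₀ (abs_nonneg _) h1 _
    _ = 2 ^ (2*m) * (max |x| |y|) ^ (2*m) := by rw [mul_pow]
    _ ≤ 2 ^ (2*m) * (|x| ^ (2*m) + |y| ^ (2*m)) := by
        apply mul_le_mul_of_nonneg_left _ (by positivity)
        rcases le_total |x| |y| with h | h
        · rw [max_eq_right h]
          exact le_add_of_nonneg_left (by positivity)
        · rw [max_eq_left h]
          exact le_add_of_nonneg_right (by positivity)

lemma gamma_decomp {N : ℕ} (hN1 : 1 ≤ N) (a b : Fin N → Fin N → ℝ)
    (hasymm : ∀ i j, a i j = a j i) (hbsymm : ∀ i j, b i j = b j i)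
    (hbsum : ∑ i, ∑ j, b i j = 0) (π : Equiv.Perm (Fin N)) :
    gammaStat N a b π
      = (2/(N:ℝ)) * (∑ i, (∑ j, a i j) * (∑ j, b (π i) j))
        + ∑ p : Fin N × Fin N,
            (a p.1 p.2 - ((∑ j, a p.1 j) + (∑ j, a p.2 j))/(N:ℝ))
            * (b (π p.1) (π p.2) - ((∑ j, b (π p.1) j) + (∑ j, b (π p.2) j))/(N:ℝ)) := by
  classical
  have hNne : (N:ℝ) ≠ 0 := by
    have : (0:ℝ) < N := by exact_mod_cast hN1
    exact ne_of_gt this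
  set r : Fin N → ℝ := fun i => ∑ j, a i j with hr
  set s : Fin N → ℝ := fun x => ∑ j, b x j with hs
  set bh : Fin N → Fin N → ℝ := fun x y => b x y - (s x + s y)/(N:ℝ) with hbh
  have hssum : ∑ x, s x = 0 := hbsum
  have hcolb : ∀ y, ∑ x, b x y = s y := by
    intro y
    rw [hs]
    exact Finset.sum_congr rfl (fun x _ => hbsymm x y)
  have hcola : ∀ j, ∑ i, a i j = r j := by
    intro j
    rw [hr]
    exact Finset.sum_congr rfl (fun i _ => hasymm i j)
  have hrowbh : ∀ x, ∑ y, bh x y = 0 := by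
    intro x
    rw [hbh]
    simp only
    rw [Finset.sum_sub_distrib, ← Finset.sum_div, Finset.sum_add_distrib, Finset.sum_const,
      hssum, Finset.card_univ, Fintype.card_fin]
    field_simp
    simp only [hs, nsmul_eq_mul, add_zero, zero_add, zero_mul]; ring
  have hcolbh : ∀ y, ∑ x, bh x y = 0 := by
    intro y
    rw [hbh]
    simp only
    rw [Finset.sum_sub_distrib, ← Finset.sum_div, Finset.sum_add_distrib, Finset.sum_const,
      hssum, hcolb, Finset.card_univ, Fintype.card_fin]
    field_simp
    simp only [nsmul_eq_mul, add_zero, zero_add, zero_mul]; ring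
  have hrowπ : ∀ x, ∑ j, bh x (π j) = 0 := by
    intro x
    rw [Equiv.sum_comp π (fun y => bh x y)]
    exact hrowbh x
  have hcolπ : ∀ y, ∑ i, bh (π i) y = 0 := by
    intro y
    rw [Equiv.sum_comp π (fun x => bh x y)]
    exact hcolbh y
  have hT : ∑ p : Fin N × Fin N, (a p.1 p.2 - (r p.1 + r p.2)/(N:ℝ)) * bh (π p.1) (π p.2)
      = gammaStat N a b π - (2/(N:ℝ)) * ∑ i, r i * s (π i) := by
    have e1 : ∑ p : Fin N × Fin N, (a p.1 p.2 - (r p.1 + r p.2)/(N:ℝ)) * bh (π p.1) (π p.2)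
        = ∑ i, ∑ j, (a i j - (r i + r j)/(N:ℝ)) * bh (π i) (π j) := by
      rw [Fintype.sum_prod_type]
    have e2 : ∀ i j : Fin N, (a i j - (r i + r j)/(N:ℝ)) * bh (π i) (π j)
        = a i j * bh (π i) (π j) - (r i/(N:ℝ)) * bh (π i) (π j)
          - (r j/(N:ℝ)) * bh (π i) (π j) := by
      intro i j
      ring
    have e3 : ∑ i, ∑ j, (r i/(N:ℝ)) * bh (π i) (π j) = 0 := by
      apply Finset.sum_eq_zero
      intro i _
      rw [← Finset.mul_sum, hrowπ, mul_zero]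
    have e4 : ∑ i, ∑ j, (r j/(N:ℝ)) * bh (π i) (π j) = 0 := by
      rw [Finset.sum_comm]
      apply Finset.sum_eq_zero
      intro j _
      rw [← Finset.mul_sum, hcolπ, mul_zero]
    have e5 : ∀ i j : Fin N, a i j * bh (π i) (π j)
        = a i j * b (π i) (π j) - a i j * s (π i)/(N:ℝ) - a i j * s (π j)/(N:ℝ) := by
      intro i j
      rw [hbh]
      simp only
      ring
    have e6 : ∑ i, ∑ j, a i j * s (π i)/(N:ℝ) = (∑ i, r i * s (π i))/(N:ℝ) := by
      have hin : ∀ i, ∑ j, a i j * s (π i)/(N:ℝ) = r i * s (π i)/(N:ℝ) := by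
        intro i
        rw [← Finset.sum_div, ← Finset.sum_mul, hr]
      rw [Fintype.sum_congr _ _ hin, ← Finset.sum_div]
    have e7 : ∑ i, ∑ j, a i j * s (π j)/(N:ℝ) = (∑ j, r j * s (π j))/(N:ℝ) := by
      have hin : ∀ j, ∑ i, a i j * s (π j)/(N:ℝ) = r j * s (π j)/(N:ℝ) := by
        intro j
        rw [← Finset.sum_div, ← Finset.sum_mul, hcola]
      rw [Finset.sum_comm, Fintype.sum_congr _ _ hin, ← Finset.sum_div]
    calc ∑ p : Fin N × Fin N, (a p.1 p.2 - (r p.1 + r p.2)/(N:ℝ)) * bh (π p.1) (π p.2)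
        = ∑ i, ∑ j, (a i j - (r i + r j)/(N:ℝ)) * bh (π i) (π j) := e1
      _ = ∑ i, ∑ j, (a i j * bh (π i) (π j) - (r i/(N:ℝ)) * bh (π i) (π j)
            - (r j/(N:ℝ)) * bh (π i) (π j)) := by
          apply Finset.sum_congr rfl; intro i _
          apply Finset.sum_congr rfl; intro j _
          exact e2 i j
      _ = ∑ i, ∑ j, a i j * bh (π i) (π j) := by
          simp only [Finset.sum_sub_distrib]
          rw [e3, e4]
          ring
      _ = ∑ i, ∑ j, (a i j * b (π i) (π j) - a i j * s (π i)/(N:ℝ)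
            - a i j * s (π j)/(N:ℝ)) := by
          apply Finset.sum_congr rfl; intro i _
          apply Finset.sum_congr rfl; intro j _
          exact e5 i j
      _ = gammaStat N a b π - (∑ i, r i * s (π i))/(N:ℝ) - (∑ j, r j * s (π j))/(N:ℝ) := by
          simp only [Finset.sum_sub_distrib]
          rw [e6, e7, gammaStat]
      _ = gammaStat N a b π - (2/(N:ℝ)) * ∑ i, r i * s (π i) := by ring
  have hmatch : ∑ p : Fin N × Fin N,
      (a p.1 p.2 - ((∑ j, a p.1 j) + (∑ j, a p.2 j))/(N:ℝ))
      * (b (π p.1) (π p.2) - ((∑ j, b (π p.1) j) + (∑ j, b (π p.2) j))/(N:ℝ))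
      = ∑ p : Fin N × Fin N, (a p.1 p.2 - (r p.1 + r p.2)/(N:ℝ)) * bh (π p.1) (π p.2) := rfl
  have hL : (∑ i, (∑ j, a i j) * (∑ j, b (π i) j)) = ∑ i, r i * s (π i) := rfl
  rw [hmatch, hT, hL]
  ring

lemma bh_row {N : ℕ} (hN1 : 1 ≤ N) (b : Fin N → Fin N → ℝ)
    (hbsum : ∑ i, ∑ j, b i j = 0) :
    ∀ x, ∑ y, (b x y - ((∑ j, b x j) + (∑ j, b y j))/(N:ℝ)) = 0 := by
  intro x
  have hNne : (N:ℝ) ≠ 0 := by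
    have : (0:ℝ) < N := by exact_mod_cast hN1
    exact ne_of_gt this
  rw [Finset.sum_sub_distrib, ← Finset.sum_div, Finset.sum_add_distrib, Finset.sum_const,
    hbsum, Finset.card_univ, Fintype.card_fin]
  field_simp
  simp only [nsmul_eq_mul, add_zero, zero_add, zero_mul]; ring

lemma bh_col {N : ℕ} (hN1 : 1 ≤ N) (b : Fin N → Fin N → ℝ)
    (hbsymm : ∀ i j, b i j = b j i) (hbsum : ∑ i, ∑ j, b i j = 0) :
    ∀ y, ∑ x, (b x y - ((∑ j, b x j) + (∑ j, b y j))/(N:ℝ)) = 0 := by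
  intro y
  have hNne : (N:ℝ) ≠ 0 := by
    have : (0:ℝ) < N := by exact_mod_cast hN1
    exact ne_of_gt this
  have hcolb : ∑ x, b x y = ∑ j, b y j :=
    Finset.sum_congr rfl (fun x _ => hbsymm x y)
  rw [Finset.sum_sub_distrib, ← Finset.sum_div, Finset.sum_add_distrib, Finset.sum_const,
    hbsum, hcolb, Finset.card_univ, Fintype.card_fin]
  field_simp
  simp only [nsmul_eq_mul, add_zero, zero_add, zero_mul]; ring

lemma even_pow_nonneg (m : ℕ) (x : ℝ) : 0 ≤ x^(2*m) := by
  rw [pow_mul]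
  exact pow_nonneg (sq_nonneg x) m

/-- **Even moment order bound.** -/
theorem even_moment_bigO
    (a b : (N : ℕ) → Fin N → Fin N → ℝ)
    (ha_symm : ∀ N, ∀ i j : Fin N, a N i j = a N j i)
    (hb_symm : ∀ N, ∀ i j : Fin N, b N i j = b N j i)
    (ha_sum : ∀ N, ∑ i, ∑ j, a N i j = 0)
    (hb_sum : ∀ N, ∑ i, ∑ j, b N i j = 0)
    (hA : AsympEquiv (fun N => ∑ i, ∑ j, ∑ k, a N i j * a N i k)
      (fun N => (N : ℝ) ^ 3 * (arrMax N (a N)) ^ 2))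
    (hB : AsympEquiv (fun N => ∑ i, ∑ j, ∑ k, b N i j * b N i k)
      (fun N => (N : ℝ) ^ 3 * (arrMax N (b N)) ^ 2))
    :
    ∀ m : ℕ, 0 < m →
      (fun N : ℕ => permE N (fun π => (gammaStat N (a N) (b N) π) ^ (2 * m)))
        =O[atTop] (fun N => (N : ℝ) ^ (3 * m)
          * (arrMax N (a N)) ^ (2 * m) * (arrMax N (b N)) ^ (2 * m)) := by
  intro m hm
  classical
  set C1 : ℝ := 2^((2*m)*(2*m) + 2*(2*m)) * ((2*m).factorial : ℝ) with hC1
  set C2 : ℝ := 2^(4*(2*m)*(2*m) + 2*(2*m)) * ((2*(2*m)).factorial : ℝ) with hC2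
  have hC1pos : 0 ≤ C1 := by rw [hC1]; positivity
  have hC2pos : 0 ≤ C2 := by rw [hC2]; positivity
  set C : ℝ := 2^(2*m) * (2^(2*m) * C1 + 3^(4*m) * C2) with hC
  rw [Asymptotics.isBigO_iff]
  refine ⟨C, Filter.eventually_atTop.2 ⟨8*m+8, ?_⟩⟩
  intro N hNthr
  have hN1 : 1 ≤ N := by omega
  have hNne : (N:ℝ) ≠ 0 := by
    have : (0:ℝ) < N := by exact_mod_cast hN1
    exact ne_of_gt this
  set amax : ℝ := arrMax N (a N) with hamax
  set bmax : ℝ := arrMax N (b N) with hbmax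
  have hamax0 : 0 ≤ amax := arrMax_nonneg hN1 (a N)
  have hbmax0 : 0 ≤ bmax := arrMax_nonneg hN1 (b N)
  set r : Fin N → ℝ := fun i => ∑ j, a N i j with hr
  set s : Fin N → ℝ := fun x => ∑ j, b N x j with hs
  set A : Fin N × Fin N → ℝ := fun p => a N p.1 p.2 - (r p.1 + r p.2)/(N:ℝ) with hA'
  set bh : Fin N → Fin N → ℝ := fun x y => b N x y - (s x + s y)/(N:ℝ) with hbh
  -- bounds on entries
  have hra : ∀ i, |r i| ≤ (N:ℝ) * amax := by
    intro i
    rw [hr]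
    calc |∑ j, a N i j| ≤ ∑ j, |a N i j| := Finset.abs_sum_le_sum_abs _ _
      _ ≤ ∑ _j : Fin N, amax := Finset.sum_le_sum (fun j _ => abs_le_arrMax (a N) i j)
      _ = (N:ℝ) * amax := by rw [Finset.sum_const]; simp
  have hsb : ∀ x, |s x| ≤ (N:ℝ) * bmax := by
    intro x
    rw [hs]
    calc |∑ j, b N x j| ≤ ∑ j, |b N x j| := Finset.abs_sum_le_sum_abs _ _
      _ ≤ ∑ _j : Fin N, bmax := Finset.sum_le_sum (fun j _ => abs_le_arrMax (b N) x j)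
      _ = (N:ℝ) * bmax := by rw [Finset.sum_const]; simp
  have hAa : ∀ p, |A p| ≤ 3 * amax := by
    intro p
    rw [hA']
    have h1 : |(r p.1 + r p.2)/(N:ℝ)| ≤ 2 * amax := by
      rw [abs_div]
      rw [abs_of_nonneg (by exact_mod_cast Nat.zero_le N : (0:ℝ) ≤ N)]
      rw [div_le_iff₀ (by positivity : (0:ℝ) < N)]
      calc |r p.1 + r p.2| ≤ |r p.1| + |r p.2| := abs_add_le _ _
        _ ≤ (N:ℝ)*amax + (N:ℝ)*amax := add_le_add (hra _) (hra _)
        _ = 2*amax*(N:ℝ) := by ring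
    calc |a N p.1 p.2 - (r p.1 + r p.2)/(N:ℝ)|
        ≤ |a N p.1 p.2| + |(r p.1 + r p.2)/(N:ℝ)| := abs_sub _ _
      _ ≤ amax + 2*amax := add_le_add (abs_le_arrMax (a N) _ _) h1
      _ = 3*amax := by ring
  have hbhb : ∀ x y, |bh x y| ≤ 3 * bmax := by
    intro x y
    rw [hbh]
    have h1 : |(s x + s y)/(N:ℝ)| ≤ 2 * bmax := by
      rw [abs_div]
      rw [abs_of_nonneg (by exact_mod_cast Nat.zero_le N : (0:ℝ) ≤ N)]
      rw [div_le_iff₀ (by positivity : (0:ℝ) < N)]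
      calc |s x + s y| ≤ |s x| + |s y| := abs_add_le _ _
        _ ≤ (N:ℝ)*bmax + (N:ℝ)*bmax := add_le_add (hsb _) (hsb _)
        _ = 2*bmax*(N:ℝ) := by ring
    calc |b N x y - (s x + s y)/(N:ℝ)|
        ≤ |b N x y| + |(s x + s y)/(N:ℝ)| := abs_sub _ _
      _ ≤ bmax + 2*bmax := add_le_add (abs_le_arrMax (b N) _ _) h1
      _ = 3*bmax := by ring
  have hbhrow : ∀ x, ∑ y, bh x y = 0 := bh_row hN1 (b N) (hb_sum N)
  have hbhcol : ∀ y, ∑ x, bh x y = 0 := bh_col hN1 (b N) (hb_symm N) (hb_sum N)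
  have hssum : ∑ x, s x = 0 := hb_sum N
  -- decomposition
  have hdecomp : ∀ π : Equiv.Perm (Fin N),
      gammaStat N (a N) (b N) π
        = (2/(N:ℝ)) * (∑ i, r i * s (π i)) + ∑ p : Fin N × Fin N, A p * bh (π p.1) (π p.2) :=
    fun π => gamma_decomp hN1 (a N) (b N) (ha_symm N) (hb_symm N) (hb_sum N) π
  -- moment bounds
  have hS1 : ∑ π : Equiv.Perm (Fin N), (∑ i, r i * s (π i))^(2*m)
      ≤ (N.factorial : ℝ) * C1 * (N:ℝ)^m * ((N:ℝ)*amax)^(2*m) * ((N:ℝ)*bmax)^(2*m) := by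
    refine le_trans (le_abs_self _) ?_
    exact total_single rfl hm (by omega) r s ((N:ℝ)*amax) ((N:ℝ)*bmax)
      (by positivity) (by positivity) hra hsb hssum
  have hS2 : ∑ π : Equiv.Perm (Fin N), (∑ p : Fin N × Fin N, A p * bh (π p.1) (π p.2))^(2*m)
      ≤ (N.factorial : ℝ) * (2^(4*(2*m)*(2*m) + 2*(2*m)) * (2*(2*m)).factorial)
          * (N:ℝ)^(2*m) * (3*amax)^(2*m) * (3*bmax)^(2*m) := by
    refine le_trans (le_abs_self _) ?_
    exact total_pair (by omega) (by omega) A bh (3*amax) (3*bmax)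
      (by positivity) (by positivity) hAa hbhb hbhrow hbhcol
  -- power juggling
  have hpow1 : (2/(N:ℝ))^(2*m) * (N:ℝ)^(2*m) = 2^(2*m) := by
    rw [div_pow]
    field_simp
  have hpow2 : (N:ℝ)^m * ((N:ℝ)^(2*m) * (N:ℝ)^(2*m)) = (N:ℝ)^(3*m) * (N:ℝ)^(2*m) := by
    rw [← pow_add, ← pow_add, ← pow_add]
    congr 1
    ring
  have hpow3 : (2/(N:ℝ))^(2*m) * ((N:ℝ)^m * ((N:ℝ)^(2*m) * (N:ℝ)^(2*m)))
      = 2^(2*m) * (N:ℝ)^(3*m) := by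
    calc (2/(N:ℝ))^(2*m) * ((N:ℝ)^m * ((N:ℝ)^(2*m) * (N:ℝ)^(2*m)))
        = (2/(N:ℝ))^(2*m) * ((N:ℝ)^(3*m) * (N:ℝ)^(2*m)) := by rw [hpow2]
      _ = ((2/(N:ℝ))^(2*m) * (N:ℝ)^(2*m)) * (N:ℝ)^(3*m) := by ring
      _ = 2^(2*m) * (N:ℝ)^(3*m) := by rw [hpow1]
  have key1 : (2/(N:ℝ))^(2*m)
        * ((N.factorial : ℝ) * C1 * (N:ℝ)^m * ((N:ℝ)*amax)^(2*m) * ((N:ℝ)*bmax)^(2*m))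
      = (N.factorial : ℝ) * (2^(2*m) * C1) * ((N:ℝ)^(3*m) * amax^(2*m) * bmax^(2*m)) := by
    rw [mul_pow, mul_pow]
    linear_combination ((N.factorial : ℝ) * C1 * amax^(2*m) * bmax^(2*m)) * hpow3
  have key2 : (N.factorial : ℝ) * (2^(4*(2*m)*(2*m) + 2*(2*m)) * (2*(2*m)).factorial)
        * (N:ℝ)^(2*m) * (3*amax)^(2*m) * (3*bmax)^(2*m)
      ≤ (N.factorial : ℝ) * (3^(4*m) * C2) * ((N:ℝ)^(3*m) * amax^(2*m) * bmax^(2*m)) := by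
    have hNle : (N:ℝ)^(2*m) ≤ (N:ℝ)^(3*m) := by
      apply pow_le_pow_right₀ (by exact_mod_cast hN1)
      omega
    have h33 : (3:ℝ)^(2*m) * 3^(2*m) = 3^(4*m) := by
      rw [← pow_add]
      congr 1
      ring
    calc (N.factorial : ℝ) * (2^(4*(2*m)*(2*m) + 2*(2*m)) * (2*(2*m)).factorial)
          * (N:ℝ)^(2*m) * (3*amax)^(2*m) * (3*bmax)^(2*m)
        = ((N.factorial : ℝ) * (3^(4*m) * C2) * (amax^(2*m) * bmax^(2*m))) * (N:ℝ)^(2*m) := by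
          rw [mul_pow, mul_pow, hC2, ← h33]
          ring
      _ ≤ ((N.factorial : ℝ) * (3^(4*m) * C2) * (amax^(2*m) * bmax^(2*m))) * (N:ℝ)^(3*m) := by
          apply mul_le_mul_of_nonneg_left hNle (by positivity)
      _ = (N.factorial : ℝ) * (3^(4*m) * C2) * ((N:ℝ)^(3*m) * amax^(2*m) * bmax^(2*m)) := by
          ring
  -- sum bound
  have hGam : ∑ π : Equiv.Perm (Fin N), (gammaStat N (a N) (b N) π)^(2*m)
      ≤ (N.factorial : ℝ) * C * ((N:ℝ)^(3*m) * amax^(2*m) * bmax^(2*m)) := by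
    have step1 : ∑ π : Equiv.Perm (Fin N), (gammaStat N (a N) (b N) π)^(2*m)
        ≤ 2^(2*m) * ((2/(N:ℝ))^(2*m) * ∑ π : Equiv.Perm (Fin N), (∑ i, r i * s (π i))^(2*m)
            + ∑ π : Equiv.Perm (Fin N), (∑ p : Fin N × Fin N, A p * bh (π p.1) (π p.2))^(2*m)) := by
      calc ∑ π : Equiv.Perm (Fin N), (gammaStat N (a N) (b N) π)^(2*m)
          ≤ ∑ π : Equiv.Perm (Fin N),
              2^(2*m) * (((2/(N:ℝ)) * (∑ i, r i * s (π i)))^(2*m)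
                + (∑ p : Fin N × Fin N, A p * bh (π p.1) (π p.2))^(2*m)) := by
            apply Finset.sum_le_sum
            intro π _
            rw [hdecomp π]
            exact even_add_pow_le m _ _
        _ = 2^(2*m) * ((2/(N:ℝ))^(2*m) * ∑ π : Equiv.Perm (Fin N), (∑ i, r i * s (π i))^(2*m)
              + ∑ π : Equiv.Perm (Fin N), (∑ p : Fin N × Fin N, A p * bh (π p.1) (π p.2))^(2*m)) := by
            rw [← Finset.mul_sum]
            congr 1
            rw [Finset.sum_add_distrib, Finset.mul_sum]
            congr 1
            apply Finset.sum_congr rfl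
            intro π _
            rw [mul_pow]
    have step2 : (2/(N:ℝ))^(2*m) * ∑ π : Equiv.Perm (Fin N), (∑ i, r i * s (π i))^(2*m)
        ≤ (N.factorial : ℝ) * (2^(2*m) * C1) * ((N:ℝ)^(3*m) * amax^(2*m) * bmax^(2*m)) := by
      rw [← key1]
      apply mul_le_mul_of_nonneg_left hS1 (by positivity)
    have step3 := le_trans hS2 key2
    calc ∑ π : Equiv.Perm (Fin N), (gammaStat N (a N) (b N) π)^(2*m)
        ≤ 2^(2*m) * ((N.factorial : ℝ) * (2^(2*m) * C1) * ((N:ℝ)^(3*m) * amax^(2*m) * bmax^(2*m))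
            + (N.factorial : ℝ) * (3^(4*m) * C2) * ((N:ℝ)^(3*m) * amax^(2*m) * bmax^(2*m))) := by
          refine le_trans step1 ?_
          apply mul_le_mul_of_nonneg_left (add_le_add step2 step3) (by positivity)
      _ = (N.factorial : ℝ) * C * ((N:ℝ)^(3*m) * amax^(2*m) * bmax^(2*m)) := by
          rw [hC]
          ring
  -- conclude
  have hfactpos : (0:ℝ) < (N.factorial : ℝ) := by
    exact_mod_cast Nat.factorial_pos N
  have hpE : permE N (fun π => (gammaStat N (a N) (b N) π) ^ (2 * m))
      = (∑ π : Equiv.Perm (Fin N), (gammaStat N (a N) (b N) π)^(2*m)) / (N.factorial : ℝ) := rfl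
  have hpE0 : 0 ≤ permE N (fun π => (gammaStat N (a N) (b N) π) ^ (2 * m)) := by
    rw [hpE]
    apply div_nonneg _ (le_of_lt hfactpos)
    exact Finset.sum_nonneg (fun π _ => even_pow_nonneg m _)
  have hRHS0 : (0:ℝ) ≤ (N:ℝ)^(3*m) * amax^(2*m) * bmax^(2*m) := by positivity
  have hC0 : 0 ≤ C := by
    rw [hC]
    positivity
  rw [Real.norm_eq_abs, Real.norm_eq_abs, abs_of_nonneg hpE0]
  rw [abs_of_nonneg (by rw [hamax, hbmax] at hRHS0; exact hRHS0 :
    (0:ℝ) ≤ (N:ℝ)^(3*m) * (arrMax N (a N))^(2*m) * (arrMax N (b N))^(2*m))]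
  rw [hpE, div_le_iff₀ hfactpos]
  calc ∑ π : Equiv.Perm (Fin N), (gammaStat N (a N) (b N) π)^(2*m)
      ≤ (N.factorial : ℝ) * C * ((N:ℝ)^(3*m) * amax^(2*m) * bmax^(2*m)) := hGam
    _ = C * ((N:ℝ)^(3*m) * (arrMax N (a N))^(2*m) * (arrMax N (b N))^(2*m)) * (N.factorial : ℝ) := by
        rw [hamax, hbmax]
        ring
end
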